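/- arXiv:1611.04869 — 5 statements merged into one kernel-verified Lean document; each statement's English description precedes it below -/
import Mathlib

section
/- Let (X_n) be a positive recurrent Markov chain on a state space Σ, let A ⊂ Σ be measurable, and let τ_A = inf{n ≥ 0 : X_n ∈ A} be the first hitting time of A. Suppose u ∈ ℂ satisfies sup_{x ∈ Aᶜ} P_x[X_1 ∈ Aᶜ] < |e^{-u}|. Then for any bounded measurable φ̄ : A → ℝ, the function φ(x) = E_x[e^{u τ_A} φ̄(X_{τ_A})] is the unique bounded solution of the Dirichlet problem (Kφ)(x) = e^{-u} φ(x) for x ∈ Aᶜ and φ(x) = φ̄(x) for x ∈ A, where K is the one-step transition operator (Kφ)(x) = E_x[φ(X_1)]. -/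
open MeasureTheory ProbabilityTheory Filter
open scoped ENNReal NNReal

noncomputable def hitTime {S : Type*} (A : Set S) (ω : ℕ → S) : ℕ :=
  sInf {n | ω n ∈ A}

section hit
variable {S : Type*} {A : Set S} {ω : ℕ → S}

lemma hitTime_eq_zero (h : ω 0 ∈ A) : hitTime A ω = 0 :=
  Nat.sInf_eq_zero.2 (Or.inl h)

lemma hitTime_mem (h : ∃ n, ω n ∈ A) : ω (hitTime A ω) ∈ A :=
  Nat.sInf_mem h

lemma hitTime_not_mem_lt {k : ℕ} (hk : k < hitTime A ω) : ω k ∉ A :=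
  Nat.notMem_of_lt_sInf hk

lemma hitTime_pos (h0 : ω 0 ∉ A) (h : ∃ n, ω n ∈ A) : 0 < hitTime A ω := by
  rcases Nat.eq_zero_or_pos (hitTime A ω) with h' | h'
  · exact absurd (h' ▸ hitTime_mem h) h0
  · exact h'

lemma hitTime_shift (h0 : ω 0 ∉ A) (h : ∃ n, ω n ∈ A) :
    hitTime A ω = hitTime A (fun n => ω (n + 1)) + 1 := by
  have hpos := hitTime_pos h0 h
  obtain ⟨m, hm⟩ : ∃ m, hitTime A ω = m + 1 := ⟨hitTime A ω - 1, by omega⟩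
  have hmem : ω (m + 1) ∈ A := hm ▸ hitTime_mem h
  have h1 : hitTime A (fun n => ω (n + 1)) ≤ m := Nat.sInf_le hmem
  have h2 : m ≤ hitTime A (fun n => ω (n + 1)) := by
    by_contra hc
    push_neg at hc
    have : ω (hitTime A (fun n => ω (n + 1)) + 1) ∈ A :=
      hitTime_mem (⟨m, hmem⟩ : ∃ n, (fun n => ω (n + 1)) n ∈ A)
    exact hitTime_not_mem_lt (by omega : hitTime A (fun n => ω (n+1)) + 1 < hitTime A ω) this
  omega

end hit

lemma measurable_comp_nat {α β : Type*} [MeasurableSpace α] [MeasurableSpace β]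
    {f : ℕ → α → β} (hf : ∀ n, Measurable (f n)) {g : α → ℕ} (hg : Measurable g) :
    Measurable fun a => f (g a) a := by
  intro t ht
  have : (fun a => f (g a) a) ⁻¹' t = ⋃ n, g ⁻¹' {n} ∩ f n ⁻¹' t := by
    ext a
    simp only [Set.mem_preimage, Set.mem_iUnion, Set.mem_inter_iff, Set.mem_singleton_iff]
    exact ⟨fun h => ⟨g a, rfl, h⟩, fun ⟨n, hn, h⟩ => hn ▸ h⟩
  rw [this]
  exact MeasurableSet.iUnion fun n =>
    (hg (MeasurableSet.singleton n)).inter (hf n ht)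

lemma measurable_hitTime {S : Type*} [MeasurableSpace S] {A : Set S} (hA : MeasurableSet A) :
    Measurable (hitTime A) := by
  apply measurable_to_countable'
  intro n
  rcases n with _ | n
  · have : hitTime A ⁻¹' {0} = ((fun ω : ℕ → S => ω 0) ⁻¹' A) ∪ ⋂ k, (fun ω : ℕ → S => ω k) ⁻¹' Aᶜ := by
      ext ω
      simp only [Set.mem_preimage, Set.mem_singleton_iff, Set.mem_union, Set.mem_iInter,
        Set.mem_compl_iff, hitTime, Nat.sInf_eq_zero]
      constructor
      · rintro (h | h)
        · exact Or.inl h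
        · exact Or.inr fun k => by
            simp only [Set.eq_empty_iff_forall_notMem, Set.mem_setOf_eq] at h; exact h k
      · rintro (h | h)
        · exact Or.inl h
        · exact Or.inr (Set.eq_empty_iff_forall_notMem.2 h)
    rw [this]
    exact ((measurable_pi_apply 0) hA).union (MeasurableSet.iInter fun k =>
      (measurable_pi_apply k) hA.compl)
  · have : hitTime A ⁻¹' {n + 1} =
        ((fun ω : ℕ → S => ω (n+1)) ⁻¹' A) ∩ ⋂ k ≤ n, (fun ω : ℕ → S => ω k) ⁻¹' Aᶜ := by
      ext ω
      simp only [Set.mem_preimage, Set.mem_singleton_iff, Set.mem_inter_iff, Set.mem_iInter,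
        Set.mem_compl_iff]
      constructor
      · intro h
        refine ⟨h ▸ hitTime_mem ?_, fun k hk => hitTime_not_mem_lt (by omega)⟩
        by_contra hc
        push_neg at hc
        have : hitTime A ω = 0 := Nat.sInf_eq_zero.2 (Or.inr (Set.eq_empty_iff_forall_notMem.2 hc))
        omega
      · rintro ⟨h1, h2⟩
        have hle : hitTime A ω ≤ n + 1 := Nat.sInf_le h1
        have : ¬ hitTime A ω ≤ n := fun hc =>
          h2 _ hc (hitTime_mem ⟨n + 1, h1⟩)
        omega
    rw [this]
    exact ((measurable_pi_apply (n+1)) hA).inter (MeasurableSet.biInter (Set.to_countable _)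
      fun k _ => (measurable_pi_apply k) hA.compl)

set_option maxHeartbeats 1000000 in
/-- Feynman–Kac representation: under the Laplace-transform condition
`sup_{x ∉ A} P_x[X₁ ∉ A] < |e^{-u}|`, the function
`φ(x) = E_x[e^{u τ_A} φ̄(X_{τ_A})]` is the unique bounded (measurable) solution of the
Dirichlet problem `(Kφ)(x) = e^{-u} φ(x)` on `Aᶜ`, `φ = φ̄` on `A`. -/
theorem feynman_kac_dirichlet
    {S : Type*} [MeasurableSpace S] [MeasurableSingletonClass S]
    (P : Kernel S (ℕ → S)) [IsMarkovKernel P]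
    -- the chain starts at `x` under `P x`
    (hStart : ∀ x : S, P x {ω | ω 0 = x} = 1)
    -- one-step Markov property
    (hMarkov : ∀ (x : S) (F : (ℕ → S) → ℂ), Measurable F → (∃ C, ∀ ω, ‖F ω‖ ≤ C) →
      ∫ ω, F (fun n => ω (n + 1)) ∂(P x) = ∫ ω, (∫ ω', F ω' ∂(P (ω 1))) ∂(P x))
    (A : Set S) (hA : MeasurableSet A)
    -- positive recurrence: the set `A` is almost surely hit
    (hRec : ∀ x : S, P x {ω | ∃ n, ω n ∈ A} = 1)
    (u : ℂ) (q : ℝ)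
    (hq : ∀ x ∉ A, (P x {ω | ω 1 ∉ A}).toReal ≤ q)
    (hqu : q < ‖Complex.exp (-u)‖)
    (φb : S → ℝ) (hφbMeas : Measurable φb) (hφbBdd : ∃ C, ∀ x, |φb x| ≤ C) :
    let φ : S → ℂ := fun x =>
      ∫ ω, Complex.exp (u * (hitTime A ω : ℂ)) * (φb (ω (hitTime A ω)) : ℂ) ∂(P x)
    ((∃ C, ∀ x, ‖φ x‖ ≤ C) ∧
      (∀ x ∉ A, ∫ ω, φ (ω 1) ∂(P x) = Complex.exp (-u) * φ x) ∧
      (∀ x ∈ A, φ x = (φb x : ℂ))) ∧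
    (∀ g : S → ℂ, Measurable g → (∃ C, ∀ x, ‖g x‖ ≤ C) →
      (∀ x ∉ A, ∫ ω, g (ω 1) ∂(P x) = Complex.exp (-u) * g x) →
      (∀ x ∈ A, g x = (φb x : ℂ)) → g = φ) := by
  intro φ
  obtain ⟨C0, hC0⟩ := hφbBdd
  set C : ℝ := max C0 0 with hCdef
  have hC : ∀ x, |φb x| ≤ C := fun x => (hC0 x).trans (le_max_left _ _)
  have hCpos : 0 ≤ C := le_max_right _ _
  set r : ℝ := Real.exp u.re with hrdef
  have hrpos : 0 < r := Real.exp_pos _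
  have hnormexp : ∀ n : ℕ, ‖Complex.exp (u * (n : ℂ))‖ = r ^ n := by
    intro n
    rw [Complex.norm_exp]
    have : (u * (n : ℂ)).re = u.re * n := by
      simp [Complex.mul_re]
    rw [this, mul_comm, Real.exp_nat_mul]
  have hnormexpneg : ‖Complex.exp (-u)‖ = r⁻¹ := by
    rw [Complex.norm_exp]
    simp [Real.exp_neg, hrdef]
  set q0 : ℝ := max q 0 with hq0def
  have hq00 : 0 ≤ q0 := le_max_right _ _
  have hq0 : ∀ x ∉ A, (P x {ω | ω 1 ∉ A}).toReal ≤ q0 :=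
    fun x hx => (hq x hx).trans (le_max_left _ _)
  have hq0r : q0 * r < 1 := by
    rw [hnormexpneg] at hqu
    have h1 : q0 < r⁻¹ := max_lt hqu (by positivity)
    calc q0 * r < r⁻¹ * r := mul_lt_mul_of_pos_right h1 hrpos
    _ = 1 := inv_mul_cancel₀ hrpos.ne'
  -- basic measurability
  have hτMeas : Measurable (hitTime A) := measurable_hitTime hA
  have hshMeas : Measurable (fun ω : ℕ → S => (fun n => ω (n + 1))) :=
    measurable_pi_lambda _ fun n => measurable_pi_apply _
  have hEvalτ : Measurable fun ω : ℕ → S => ω (hitTime A ω) :=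
    measurable_comp_nat (fun n => measurable_pi_apply n) hτMeas
  -- a.e. facts
  have haeStart : ∀ x, ∀ᵐ ω ∂P x, ω 0 = x := by
    intro x
    have hms : MeasurableSet {ω : ℕ → S | ω 0 = x} := by
      have : {ω : ℕ → S | ω 0 = x} = (fun ω : ℕ → S => ω 0) ⁻¹' {x} := rfl
      rw [this]; exact measurable_pi_apply 0 (measurableSet_singleton x)
    exact ae_iff.2 ((prob_compl_eq_zero_iff hms).2 (hStart x))
  have haeRec : ∀ x, ∀ᵐ ω ∂P x, ∃ n, ω n ∈ A := by
    intro x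
    have hms : MeasurableSet {ω : ℕ → S | ∃ n, ω n ∈ A} := by
      have : {ω : ℕ → S | ∃ n, ω n ∈ A} = ⋃ n, (fun ω : ℕ → S => ω n) ⁻¹' A := by
        ext ω; simp
      rw [this]
      exact MeasurableSet.iUnion fun n => measurable_pi_apply n hA
    exact ae_iff.2 ((prob_compl_eq_zero_iff hms).2 (hRec x))
  -- integrability of bounded measurable functions
  have hIntBdd : ∀ {E : Type} [NormedAddCommGroup E] (f : (ℕ → S) → E) (x : S) (c : ℝ),
      AEStronglyMeasurable f (P x) → (∀ ω, ‖f ω‖ ≤ c) → Integrable f (P x) :=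
    fun f x c hm hb => (integrable_const c).mono' hm (Filter.Eventually.of_forall hb)
  -- the function F
  set F : (ℕ → S) → ℂ :=
    fun ω => Complex.exp (u * (hitTime A ω : ℂ)) * (φb (ω (hitTime A ω)) : ℂ) with hFdef
  have hφeq : ∀ x, φ x = ∫ ω, F ω ∂P x := fun _ => rfl
  have hFMeas : Measurable F := by
    apply Measurable.mul
    · exact (measurable_of_countable fun n : ℕ => Complex.exp (u * (n : ℂ))).comp hτMeas
    · exact Complex.measurable_ofReal.comp (hφbMeas.comp hEvalτ)
  have hFle : ∀ ω, ‖F ω‖ ≤ C * r ^ hitTime A ω := by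
    intro ω
    rw [hFdef, norm_mul, hnormexp, Complex.norm_real, Real.norm_eq_abs, mul_comm]
    exact mul_le_mul_of_nonneg_right (hC _) (by positivity)
  -- tail estimate
  set tails : ℕ → Set (ℕ → S) :=
    fun n => ⋂ k ≤ n, (fun ω : ℕ → S => ω k) ⁻¹' Aᶜ with htailsdef
  have htailsMeas : ∀ n, MeasurableSet (tails n) :=
    fun n => MeasurableSet.biInter (Set.to_countable _)
      fun k _ => measurable_pi_apply k hA.compl
  have htails_mem : ∀ n ω, ω ∈ tails n ↔ ∀ k ≤ n, ω k ∉ A := by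
    intro n ω; simp [htailsdef]
  have hPA0 : ∀ y ∈ A, ∀ s : Set (ℕ → S), (∀ ω ∈ s, ω 0 ∉ A) → P y s = 0 := by
    intro y hy s hs
    have h0 : P y {ω : ℕ → S | ω 0 ∉ A} = 0 := by
      rw [measure_eq_zero_iff_ae_notMem]
      filter_upwards [haeStart y] with ω hω
      simp only [Set.mem_setOf_eq, hω, not_not]
      exact hy
    exact le_antisymm ((measure_mono hs).trans h0.le) zero_le
  have htails_bound : ∀ n, ∀ x ∉ A, (P x (tails n)).toReal ≤ q0 ^ n := by
    intro n
    induction n with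
    | zero =>
      intro x hx
      simp only [pow_zero]
      exact ENNReal.toReal_le_of_le_ofReal zero_le_one (by simpa using prob_le_one)
    | succ n ih =>
      intro x hx
      have hset : tails (n+1) = {ω : ℕ → S | ω 0 ∉ A} ∩
          ((fun ω : ℕ → S => fun k => ω (k+1)) ⁻¹' tails n) := by
        ext ω
        simp only [Set.mem_inter_iff, Set.mem_setOf_eq, Set.mem_preimage, htails_mem]
        constructor
        · intro h
          exact ⟨h 0 (Nat.zero_le _), fun k hk => h (k+1) (by omega)⟩
        · rintro ⟨h0, h⟩ k hk
          rcases k with _ | k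
          · exact h0
          · exact h k (by omega)
      have hmeq : P x (tails (n+1)) = P x ((fun ω : ℕ → S => fun k => ω (k+1)) ⁻¹' tails n) := by
        rw [hset]
        apply measure_congr
        filter_upwards [haeStart x] with ω hω
        simp only [eq_iff_iff, Set.mem_inter_iff, Set.mem_setOf_eq]
        exact and_iff_right (by simp only [Set.mem_setOf_eq, hω]; exact hx)
      have hMstep : (P x ((fun ω : ℕ → S => fun k => ω (k+1)) ⁻¹' tails n)).toReal
          = ∫ ω, (P (ω 1) (tails n)).toReal ∂P x := by
        have hm := hMarkov x ((tails n).indicator fun _ => (1:ℂ))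
          (measurable_const.indicator (htailsMeas n))
          ⟨1, fun ω => by by_cases h : ω ∈ tails n <;> simp [h]⟩
        have hL : (fun ω : ℕ → S => (tails n).indicator (fun _ => (1:ℂ)) (fun k => ω (k+1)))
            = ((fun ω : ℕ → S => fun k => ω (k+1)) ⁻¹' tails n).indicator (fun _ => (1:ℂ)) := by
          funext ω; rfl
        rw [hL, integral_indicator_const _ (hshMeas (htailsMeas n))] at hm
        have hin : ∀ y : S, ∫ ω', (tails n).indicator (fun _ => (1:ℂ)) ω' ∂P y
            = ((P y (tails n)).toReal : ℂ) := by
          intro y; rw [integral_indicator_const _ (htailsMeas n)]; simp [measureReal_def]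
        simp only [hin] at hm
        rw [show (∫ ω : ℕ → S, (((P (ω 1)) (tails n)).toReal : ℂ) ∂P x)
            = ((∫ ω : ℕ → S, ((P (ω 1)) (tails n)).toReal ∂P x : ℝ) : ℂ) from
          integral_ofReal, Complex.real_smul, mul_one] at hm
        exact_mod_cast hm
      have hpmeas : Measurable fun y : S => (P y (tails n)).toReal :=
        (Kernel.measurable_coe P (htailsMeas n)).ennreal_toReal
      have hple : ∀ y : S, (P y (tails n)).toReal
          ≤ q0 ^ n * Set.indicator Aᶜ (fun _ => (1:ℝ)) y := by
        intro y
        by_cases hy : y ∈ A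
        · have h0 : P y (tails n) = 0 :=
            hPA0 y hy _ (fun ω hω => (htails_mem n ω).1 hω 0 (Nat.zero_le _))
          simp [h0, Set.indicator_of_notMem (by simpa using hy : y ∉ Aᶜ)]
        · rw [Set.indicator_of_mem (by simpa using hy : y ∈ Aᶜ), mul_one]
          exact ih y hy
      have hIleft : Integrable (fun ω : ℕ → S => (P (ω 1) (tails n)).toReal) (P x) :=
        hIntBdd _ x 1 ((hpmeas.comp (measurable_pi_apply 1)).aestronglyMeasurable)
          (fun ω => by
            rw [Real.norm_eq_abs, abs_of_nonneg ENNReal.toReal_nonneg]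
            exact ENNReal.toReal_le_of_le_ofReal zero_le_one (by simpa using prob_le_one))
      have hIndMeas : Measurable fun y : S => Set.indicator Aᶜ (fun _ => (1:ℝ)) y :=
        measurable_const.indicator hA.compl
      have hIright : Integrable
          (fun ω : ℕ → S => q0 ^ n * Set.indicator Aᶜ (fun _ => (1:ℝ)) (ω 1)) (P x) := by
        apply Integrable.const_mul
        exact hIntBdd _ x 1 ((hIndMeas.comp (measurable_pi_apply 1)).aestronglyMeasurable)
          (fun ω => by by_cases h : ω 1 ∈ Aᶜ <;> simp [h])
      have hind : ∫ ω, Set.indicator Aᶜ (fun _ => (1:ℝ)) (ω 1) ∂P x ≤ q0 := by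
        have hL2 : (fun ω : ℕ → S => Set.indicator Aᶜ (fun _ => (1:ℝ)) (ω 1))
            = ((fun ω : ℕ → S => ω 1) ⁻¹' Aᶜ).indicator (fun _ => (1:ℝ)) := by
          funext ω; rfl
        rw [hL2, integral_indicator_const _ (measurable_pi_apply 1 hA.compl),
          smul_eq_mul, mul_one]
        exact hq0 x hx
      calc (P x (tails (n+1))).toReal = ∫ ω, (P (ω 1) (tails n)).toReal ∂P x := by
            rw [hmeq, hMstep]
      _ ≤ ∫ ω, q0^n * Set.indicator Aᶜ (fun _ => (1:ℝ)) (ω 1) ∂P x :=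
            integral_mono hIleft hIright (fun ω => hple (ω 1))
      _ = q0^n * ∫ ω, Set.indicator Aᶜ (fun _ => (1:ℝ)) (ω 1) ∂P x := integral_const_mul _ _
      _ ≤ q0^n * q0 := mul_le_mul_of_nonneg_left hind (by positivity)
      _ = q0^(n+1) := by ring
  -- hitting-time distribution bounds
  have hτsucc : ∀ x ∉ A, ∀ n : ℕ, P x (hitTime A ⁻¹' {n+1}) ≤ ENNReal.ofReal (q0 ^ n) := by
    intro x hx n
    have hsub : hitTime A ⁻¹' {n+1} ⊆ tails n := by
      intro ω hω
      rw [Set.mem_preimage, Set.mem_singleton_iff] at hω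
      rw [htails_mem]
      intro k hk
      exact hitTime_not_mem_lt (by omega)
    exact (measure_mono hsub).trans ((ENNReal.le_ofReal_iff_toReal_le (measure_ne_top _ _)
      (by positivity)).2 (htails_bound n x hx))
  have hτzero : ∀ x ∉ A, P x (hitTime A ⁻¹' {0}) = 0 := by
    intro x hx
    rw [measure_eq_zero_iff_ae_notMem]
    filter_upwards [haeStart x, haeRec x] with ω h1 h2
    simp only [Set.mem_preimage, Set.mem_singleton_iff]
    exact (hitTime_pos (by rw [h1]; exact hx) h2).ne'
  have hτA : ∀ x ∈ A, ∀ᵐ ω ∂P x, hitTime A ω = 0 := by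
    intro x hx
    filter_upwards [haeStart x] with ω h1
    exact hitTime_eq_zero (by rw [h1]; exact hx)
  -- geometric bound for the Laplace moment
  set B : ℝ := 1 + r * (1 - q0 * r)⁻¹ with hBdef
  have h1q0r : 0 < 1 - q0 * r := by linarith
  have hB1 : (1:ℝ) ≤ B := le_add_of_nonneg_right (mul_nonneg hrpos.le (inv_nonneg.2 h1q0r.le))
  have hB0 : (0:ℝ) ≤ B := zero_le_one.trans hB1
  have hlint : ∀ x, ∫⁻ ω, ENNReal.ofReal (r ^ hitTime A ω) ∂P x ≤ ENNReal.ofReal B := by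
    intro x
    have hmap : ∫⁻ ω, ENNReal.ofReal (r ^ hitTime A ω) ∂P x
        = ∑' n : ℕ, ENNReal.ofReal (r ^ n) * P x (hitTime A ⁻¹' {n}) := by
      rw [← MeasureTheory.lintegral_map
        (measurable_of_countable fun n : ℕ => ENNReal.ofReal (r ^ n)) hτMeas,
        lintegral_countable']
      congr 1
      funext n
      rw [Measure.map_apply hτMeas (measurableSet_singleton n)]
    rw [hmap]
    by_cases hx : x ∈ A
    · have hzero : ∀ n : ℕ, n ≠ 0 → ENNReal.ofReal (r ^ n) * P x (hitTime A ⁻¹' {n}) = 0 := by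
        intro n hn
        have h0 : P x (hitTime A ⁻¹' {n}) = 0 := by
          rw [measure_eq_zero_iff_ae_notMem]
          filter_upwards [hτA x hx] with ω h1
          simp only [Set.mem_preimage, Set.mem_singleton_iff, h1]
          exact fun hc => hn hc.symm
        rw [h0, mul_zero]
      rw [tsum_eq_single 0 hzero, pow_zero, ENNReal.ofReal_one, one_mul]
      exact prob_le_one.trans (by
        rw [show (1 : ℝ≥0∞) = ENNReal.ofReal 1 from ENNReal.ofReal_one.symm]
        exact ENNReal.ofReal_le_ofReal hB1)
    · rw [tsum_eq_zero_add' (f := fun n : ℕ => ENNReal.ofReal (r ^ n) * P x (hitTime A ⁻¹' {n})) ENNReal.summable]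
      have ht0 : ENNReal.ofReal (r ^ 0) * P x (hitTime A ⁻¹' {0}) = 0 := by
        rw [hτzero x hx, mul_zero]
      rw [ht0, zero_add]
      have hterm : ∀ m : ℕ, ENNReal.ofReal (r ^ (m+1)) * P x (hitTime A ⁻¹' {(m+1)})
          ≤ ENNReal.ofReal r * ENNReal.ofReal (q0 * r) ^ m := by
        intro m
        calc ENNReal.ofReal (r ^ (m+1)) * P x (hitTime A ⁻¹' {m+1})
            ≤ ENNReal.ofReal (r ^ (m+1)) * ENNReal.ofReal (q0 ^ m) := by
              gcongr
              exact hτsucc x hx m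
        _ = ENNReal.ofReal r * ENNReal.ofReal (q0 * r) ^ m := by
              rw [← ENNReal.ofReal_pow (by positivity : (0:ℝ) ≤ q0 * r),
                ← ENNReal.ofReal_mul hrpos.le,
                ← ENNReal.ofReal_mul (by positivity : (0:ℝ) ≤ r ^ (m+1))]
              congr 1
              rw [mul_pow]
              ring
      refine (ENNReal.tsum_le_tsum hterm).trans ?_
      rw [ENNReal.tsum_mul_left, ENNReal.tsum_geometric]
      have hsub1 : (1 : ℝ≥0∞) - ENNReal.ofReal (q0 * r) = ENNReal.ofReal (1 - q0 * r) := by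
        rw [ENNReal.ofReal_sub 1 (by positivity), ENNReal.ofReal_one]
      rw [hsub1, ← ENNReal.ofReal_inv_of_pos h1q0r, ← ENNReal.ofReal_mul hrpos.le]
      exact ENNReal.ofReal_le_ofReal (le_add_of_nonneg_left zero_le_one)
  -- integrability of the geometric weight
  have hPowMeas : Measurable fun ω : ℕ → S => r ^ hitTime A ω :=
    (measurable_of_countable fun n : ℕ => r ^ n).comp hτMeas
  have hIntPow : ∀ x, Integrable (fun ω => r ^ hitTime A ω) (P x) := by
    intro x
    refine ⟨hPowMeas.aestronglyMeasurable, ?_⟩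
    rw [hasFiniteIntegral_iff_norm]
    have hn : ∀ ω : ℕ → S, ENNReal.ofReal ‖r ^ hitTime A ω‖ = ENNReal.ofReal (r ^ hitTime A ω) :=
      fun ω => by rw [Real.norm_eq_abs, abs_of_nonneg (by positivity)]
    simp_rw [hn]
    exact lt_of_le_of_lt (hlint x) ENNReal.ofReal_lt_top
  have hIntPowLe : ∀ x, ∫ ω, r ^ hitTime A ω ∂P x ≤ B := by
    intro x
    rw [integral_eq_lintegral_of_nonneg_ae
      (Filter.Eventually.of_forall fun ω => by positivity) hPowMeas.aestronglyMeasurable]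
    exact ENNReal.toReal_le_of_le_ofReal hB0 (hlint x)
  -- F is integrable with uniform bound
  have hFInt : ∀ x, Integrable F (P x) := fun x =>
    ((hIntPow x).const_mul C).mono' hFMeas.aestronglyMeasurable (Filter.Eventually.of_forall hFle)
  have hIntLe : ∀ (f : (ℕ → S) → ℂ) (x : S), Integrable f (P x) →
      (∀ ω, ‖f ω‖ ≤ C * r ^ hitTime A ω) → ‖∫ ω, f ω ∂P x‖ ≤ C * B := by
    intro f x hf hb
    calc ‖∫ ω, f ω ∂P x‖ ≤ ∫ ω, ‖f ω‖ ∂P x := norm_integral_le_integral_norm _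
    _ ≤ ∫ ω, C * r ^ hitTime A ω ∂P x := integral_mono hf.norm ((hIntPow x).const_mul C) hb
    _ = C * ∫ ω, r ^ hitTime A ω ∂P x := integral_const_mul _ _
    _ ≤ C * B := mul_le_mul_of_nonneg_left (hIntPowLe x) hCpos
  have hφBdd : ∀ x, ‖φ x‖ ≤ C * B := fun x => by
    rw [hφeq]; exact hIntLe F x (hFInt x) hFle
  -- boundary values
  have hφA : ∀ x ∈ A, φ x = (φb x : ℂ) := by
    intro x hx
    rw [hφeq]
    have hc : ∀ᵐ ω ∂P x, F ω = (φb x : ℂ) := by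
      filter_upwards [haeStart x] with ω h0
      have hτ0 : hitTime A ω = 0 := hitTime_eq_zero (by rw [h0]; exact hx)
      simp only [hFdef, hτ0, h0, Nat.cast_zero, mul_zero, Complex.exp_zero, one_mul]
    rw [integral_congr_ae hc, integral_const]; simp
  -- the shift identity for F
  have hshiftF : ∀ x ∉ A, ∀ᵐ ω ∂P x, F ω = Complex.exp u * F (fun n => ω (n+1)) := by
    intro x hx
    filter_upwards [haeStart x, haeRec x] with ω h0 hh
    have h0A : ω 0 ∉ A := by rw [h0]; exact hx
    have hts := hitTime_shift h0A hh
    simp only [hFdef]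
    rw [hts]
    have hc : ((hitTime A (fun n => ω (n+1)) + 1 : ℕ) : ℂ)
        = ((hitTime A (fun n => ω (n+1)) : ℕ) : ℂ) + 1 := by push_cast; ring
    rw [hc, mul_add, mul_one, Complex.exp_add]
    ring
  -- truncations
  set FN : ℕ → (ℕ → S) → ℂ := fun N ω => if hitTime A ω ≤ N then F ω else 0 with hFNdef
  have hFNmeas : ∀ N, Measurable (FN N) := fun N =>
    Measurable.ite (hτMeas measurableSet_Iic) hFMeas measurable_const
  have hFNbdd : ∀ N, ∃ c, ∀ ω, ‖FN N ω‖ ≤ c := by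
    intro N
    refine ⟨C * (max 1 r) ^ N, fun ω => ?_⟩
    simp only [hFNdef]
    split_ifs with h
    · calc ‖F ω‖ ≤ C * r ^ hitTime A ω := hFle ω
      _ ≤ C * (max 1 r) ^ N := by
          apply mul_le_mul_of_nonneg_left _ hCpos
          calc r ^ hitTime A ω ≤ (max 1 r) ^ hitTime A ω :=
                pow_le_pow_left₀ hrpos.le (le_max_right 1 r) _
          _ ≤ (max 1 r) ^ N := pow_le_pow_right₀ (le_max_left 1 r) h
    · rw [norm_zero]; positivity
  have hFNle : ∀ N ω, ‖FN N ω‖ ≤ C * r ^ hitTime A ω := by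
    intro N ω
    simp only [hFNdef]
    split_ifs with h
    · exact hFle ω
    · rw [norm_zero]; positivity
  have hFNtend : ∀ ω, Filter.Tendsto (fun N => FN N ω) atTop (nhds (F ω)) := by
    intro ω
    apply tendsto_atTop_of_eventually_const (i₀ := hitTime A ω)
    intro N hN
    simp only [hFNdef, if_pos hN]
  have hφlim : ∀ y, Filter.Tendsto (fun N => ∫ ω, FN N ω ∂P y) atTop (nhds (φ y)) := by
    intro y
    rw [hφeq]
    exact tendsto_integral_of_dominated_convergence (fun ω => C * r ^ hitTime A ω)
      (fun N => (hFNmeas N).aestronglyMeasurable) ((hIntPow y).const_mul C)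
      (fun N => Filter.Eventually.of_forall (hFNle N)) (Filter.Eventually.of_forall hFNtend)
  have hFNInt : ∀ N y, Integrable (FN N) (P y) := fun N y =>
    ((hIntPow y).const_mul C).mono' (hFNmeas N).aestronglyMeasurable
      (Filter.Eventually.of_forall (hFNle N))
  have hFNIntBdd : ∀ N y, ‖∫ ω, FN N ω ∂P y‖ ≤ C * B := fun N y =>
    hIntLe (FN N) y (hFNInt N y) (hFNle N)
  have hFNkernel : ∀ N, StronglyMeasurable fun y => ∫ ω, FN N ω ∂P y := fun N =>
    StronglyMeasurable.integral_kernel_prod_right' (κ := P)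
      (((hFNmeas N).comp measurable_snd).stronglyMeasurable)
  -- the Dirichlet equation
  have hφdirichlet : ∀ x ∉ A, ∫ ω, φ (ω 1) ∂P x = Complex.exp (-u) * φ x := by
    intro x hx
    have e1 : φ x = Complex.exp u * ∫ ω, F (fun n => ω (n+1)) ∂P x := by
      rw [hφeq, integral_congr_ae (hshiftF x hx)]
      simp_rw [← smul_eq_mul]
      rw [integral_smul]
    have hdom : Integrable (fun ω : ℕ → S => C * r ^ hitTime A (fun n => ω (n+1))) (P x) := by
      have hae2 : (fun ω : ℕ → S => C * r⁻¹ * r ^ hitTime A ω) =ᵐ[P x]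
          (fun ω : ℕ → S => C * r ^ hitTime A (fun n => ω (n+1))) := by
        filter_upwards [haeStart x, haeRec x] with ω h0 hh
        have h0A : ω 0 ∉ A := by rw [h0]; exact hx
        rw [hitTime_shift h0A hh, pow_succ]
        have hrr : r⁻¹ * r = 1 := inv_mul_cancel₀ hrpos.ne'
        calc C * r⁻¹ * (r ^ hitTime A (fun n => ω (n+1)) * r)
            = C * r ^ hitTime A (fun n => ω (n+1)) * (r⁻¹ * r) := by ring
        _ = C * r ^ hitTime A (fun n => ω (n+1)) := by rw [hrr, mul_one]
      exact ((hIntPow x).const_mul (C * r⁻¹)).congr hae2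
    have e2 : Filter.Tendsto (fun N => ∫ ω, FN N (fun n => ω (n+1)) ∂P x) atTop
        (nhds (∫ ω, F (fun n => ω (n+1)) ∂P x)) := by
      exact tendsto_integral_of_dominated_convergence
        (fun ω => C * r ^ hitTime A (fun n => ω (n+1)))
        (fun N => ((hFNmeas N).comp hshMeas).aestronglyMeasurable) hdom
        (fun N => Filter.Eventually.of_forall fun ω => hFNle N _)
        (Filter.Eventually.of_forall fun ω => hFNtend _)
    have e3 : ∀ N, ∫ ω, FN N (fun n => ω (n+1)) ∂P x = ∫ ω, (∫ ω', FN N ω' ∂P (ω 1)) ∂P x :=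
      fun N => hMarkov x (FN N) (hFNmeas N) (hFNbdd N)
    have e4 : Filter.Tendsto (fun N => ∫ ω, (∫ ω', FN N ω' ∂P (ω 1)) ∂P x) atTop
        (nhds (∫ ω, φ (ω 1) ∂P x)) := by
      exact tendsto_integral_of_dominated_convergence (fun _ => C * B)
        (fun N => ((hFNkernel N).comp_measurable (measurable_pi_apply 1)).aestronglyMeasurable)
        (integrable_const _)
        (fun N => Filter.Eventually.of_forall fun ω => hFNIntBdd N (ω 1))
        (Filter.Eventually.of_forall fun ω => hφlim (ω 1))
    have e5 : ∫ ω, F (fun n => ω (n+1)) ∂P x = ∫ ω, φ (ω 1) ∂P x :=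
      tendsto_nhds_unique (e2.congr e3) e4
    rw [e1, e5, ← mul_assoc, ← Complex.exp_add, neg_add_cancel, Complex.exp_zero, one_mul]
  refine ⟨⟨⟨C * B, hφBdd⟩, hφdirichlet, hφA⟩, ?_⟩
  -- uniqueness
  rintro g hgMeas ⟨Cg0, hCg0⟩ hgDir hgA
  set Cg : ℝ := max Cg0 0 with hCgdef
  have hCg : ∀ x, ‖g x‖ ≤ Cg := fun x => (hCg0 x).trans (le_max_left _ _)
  have hCgpos : 0 ≤ Cg := le_max_right _ _
  set GN : ℕ → (ℕ → S) → ℂ := fun N ω =>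
    Complex.exp (u * ((min (hitTime A ω) N : ℕ) : ℂ)) * g (ω (min (hitTime A ω) N)) with hGNdef
  have hminMeas : ∀ N, Measurable fun ω : ℕ → S => min (hitTime A ω) N :=
    fun N => (measurable_of_countable fun n : ℕ => min n N).comp hτMeas
  have hGNmeas : ∀ N, Measurable (GN N) := fun N =>
    ((measurable_of_countable fun n : ℕ => Complex.exp (u * (n:ℂ))).comp (hminMeas N)).mul
      (hgMeas.comp (measurable_comp_nat (fun n => measurable_pi_apply n) (hminMeas N)))
  have hGNnorm : ∀ N ω, ‖GN N ω‖
      = r ^ min (hitTime A ω) N * ‖g (ω (min (hitTime A ω) N))‖ := by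
    intro N ω
    simp only [hGNdef]
    rw [norm_mul, hnormexp]
  have hGNbdd : ∀ N, ∀ ω, ‖GN N ω‖ ≤ Cg * (max 1 r) ^ N := by
    intro N ω
    rw [hGNnorm]
    calc r ^ min (hitTime A ω) N * ‖g (ω (min (hitTime A ω) N))‖ ≤ (max 1 r) ^ N * Cg := by
          apply mul_le_mul _ (hCg _) (norm_nonneg _) (by positivity)
          calc r ^ min (hitTime A ω) N ≤ (max 1 r) ^ min (hitTime A ω) N :=
                pow_le_pow_left₀ hrpos.le (le_max_right 1 r) _
          _ ≤ (max 1 r) ^ N := pow_le_pow_right₀ (le_max_left 1 r) (min_le_right _ _)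
    _ = Cg * (max 1 r) ^ N := mul_comm _ _
  have hminpow : ∀ N ω, r ^ min (hitTime A ω) N ≤ 1 + r ^ hitTime A ω := by
    intro N ω
    rcases le_or_gt r 1 with h | h
    · have h1 : r ^ min (hitTime A ω) N ≤ 1 := pow_le_one₀ hrpos.le h
      have h2 : (0:ℝ) ≤ r ^ hitTime A ω := by positivity
      linarith
    · have h1 : r ^ min (hitTime A ω) N ≤ r ^ hitTime A ω :=
        pow_le_pow_right₀ h.le (min_le_left _ _)
      linarith
  have hGNdom : ∀ N ω, ‖GN N ω‖ ≤ Cg * (1 + r ^ hitTime A ω) := by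
    intro N ω
    rw [hGNnorm]
    calc r ^ min (hitTime A ω) N * ‖g (ω (min (hitTime A ω) N))‖
        ≤ (1 + r ^ hitTime A ω) * Cg :=
          mul_le_mul (hminpow N ω) (hCg _) (norm_nonneg _) (by positivity)
    _ = Cg * (1 + r ^ hitTime A ω) := mul_comm _ _
  have hGNrec : ∀ N x, ∫ ω, GN N ω ∂P x = g x := by
    intro N
    induction N with
    | zero =>
      intro x
      have hc : ∀ᵐ ω ∂P x, GN 0 ω = g x := by
        filter_upwards [haeStart x] with ω h0
        simp only [hGNdef, Nat.min_zero, Nat.cast_zero, mul_zero, Complex.exp_zero, one_mul, h0]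
      rw [integral_congr_ae hc, integral_const]; simp
    | succ N ih =>
      intro x
      by_cases hx : x ∈ A
      · have hc : ∀ᵐ ω ∂P x, GN (N+1) ω = g x := by
          filter_upwards [haeStart x] with ω h0
          have hτ0 : hitTime A ω = 0 := hitTime_eq_zero (by rw [h0]; exact hx)
          simp only [hGNdef, hτ0, Nat.zero_min, Nat.cast_zero, mul_zero, Complex.exp_zero,
            one_mul, h0]
        rw [integral_congr_ae hc, integral_const]; simp
      · have hstep : ∀ᵐ ω ∂P x, GN (N+1) ω = Complex.exp u * GN N (fun n => ω (n+1)) := by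
          filter_upwards [haeStart x, haeRec x] with ω h0 hh
          have h0A : ω 0 ∉ A := by rw [h0]; exact hx
          have hts := hitTime_shift h0A hh
          simp only [hGNdef]
          rw [hts]
          have hmin : min (hitTime A (fun n => ω (n+1)) + 1) (N+1)
              = min (hitTime A (fun n => ω (n+1))) N + 1 := by omega
          rw [hmin]
          have hc : ((min (hitTime A (fun n => ω (n+1))) N + 1 : ℕ) : ℂ)
              = ((min (hitTime A (fun n => ω (n+1))) N : ℕ) : ℂ) + 1 := by push_cast; ring
          rw [hc, mul_add, mul_one, Complex.exp_add]
          ring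
        rw [integral_congr_ae hstep]
        simp_rw [← smul_eq_mul]
        rw [integral_smul, hMarkov x (GN N) (hGNmeas N) ⟨Cg * (max 1 r)^N, hGNbdd N⟩]
        simp only [ih]
        rw [hgDir x hx, smul_eq_mul, ← mul_assoc, ← Complex.exp_add, add_neg_cancel,
          Complex.exp_zero, one_mul]
  have hGNlim : ∀ x, Filter.Tendsto (fun N => ∫ ω, GN N ω ∂P x) atTop (nhds (φ x)) := by
    intro x
    rw [hφeq]
    apply tendsto_integral_of_dominated_convergence (fun ω => Cg * (1 + r ^ hitTime A ω))
      (fun N => (hGNmeas N).aestronglyMeasurable)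
      (((integrable_const 1).add (hIntPow x)).const_mul Cg)
      (fun N => Filter.Eventually.of_forall (hGNdom N))
      ?_
    filter_upwards [haeRec x] with ω hh
    apply tendsto_atTop_of_eventually_const (i₀ := hitTime A ω)
    intro N hN
    simp only [hGNdef, min_eq_left hN, hFdef]
    rw [hgA _ (hitTime_mem hh)]
  funext x
  exact tendsto_nhds_unique
    (tendsto_const_nhds.congr fun N => (hGNrec N x).symm) (hGNlim x)
end

section
/- Let (X_n) be a Markov chain with kernel K on Σ, and let π_k be a left eigenfunction of K with eigenvalue e^{−u_k}, i.e. π_k K = e^{−u_k} π_k. Then for any measurable sets B ⊂ A ⊂ Σ, one has ∫_A π_k(x) E_x[ e^{u_k (τ⁺_A − 1)} 1{τ⁺_B < τ⁺_{A∖B}} ] dx = e^{−u_k} π_k(B), where τ⁺_C denotes the first return time to C and π_k(B) = ∫_B π_k(x) dx. -/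
open MeasureTheory ProbabilityTheory

/-- First return time to a set `A` (junk value `0` if `A` is never visited at a
positive time). -/
noncomputable def retTime {S : Type*} (A : Set S) (ω : ℕ → S) : ℕ :=
  sInf {n | 1 ≤ n ∧ ω n ∈ A}


set_option linter.unusedSectionVars false


namespace LECaux

variable {S : Type*} [MeasurableSpace S] [MeasurableSingletonClass S]

/-- avoidance event: no visit to `A` at times `1,…,k-1`. -/
def av (A : Set S) (k : ℕ) : Set (ℕ → S) := {ω | ∀ m, 1 ≤ m → m < k → ω m ∉ A}

/-- first-visit event: visit `B` at time `k`, avoiding `A` before. -/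
def ev (A B : Set S) (k : ℕ) : Set (ℕ → S) := {ω | ω k ∈ B ∧ ∀ m, 1 ≤ m → m < k → ω m ∉ A}

lemma meas_av {A : Set S} (hA : MeasurableSet A) (k : ℕ) : MeasurableSet (av A k) := by
  have h : av A k = ⋂ m, ⋂ (_ : 1 ≤ m), ⋂ (_ : m < k), (fun ω : ℕ → S => ω m) ⁻¹' Aᶜ := by
    ext ω; simp [av]
  rw [h]
  exact MeasurableSet.iInter fun m => MeasurableSet.iInter fun _ =>
    MeasurableSet.iInter fun _ => (measurable_pi_apply m) hA.compl

lemma meas_ev {A B : Set S} (hA : MeasurableSet A) (hB : MeasurableSet B) (k : ℕ) :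
    MeasurableSet (ev A B k) := by
  have h : ev A B k = ((fun ω : ℕ → S => ω k) ⁻¹' B) ∩ av A k := by
    ext ω; simp [ev, av, Set.mem_setOf_eq]
  rw [h]
  exact ((measurable_pi_apply k) hB).inter (meas_av hA k)

lemma ev_subset_av (A B : Set S) (k : ℕ) : ev A B k ⊆ av A k := fun ω h => h.2

lemma av_one (A : Set S) : av A 1 = Set.univ := by
  ext ω; simp [av]; omega

lemma ev_one (A B : Set S) : ev A B 1 = {ω : ℕ → S | ω 1 ∈ B} := by
  ext ω; simp [ev]; intro _ m h1 h2; omega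

lemma shift_av (A : Set S) (k : ℕ) (hk : 1 ≤ k) :
    (fun ω : ℕ → S => fun n => ω (n + 1)) ⁻¹' ({ω : ℕ → S | ω 0 ∉ A} ∩ av A k)
      = av A (k + 1) := by
  ext ω
  simp only [Set.mem_preimage, Set.mem_inter_iff, Set.mem_setOf_eq, av]
  constructor
  · rintro ⟨h1, h2⟩ m hm1 hmk
    rcases Nat.exists_eq_add_of_le hm1 with ⟨m', rfl⟩
    cases m' with
    | zero => exact h1
    | succ m'' =>
      have := h2 (m'' + 1) (by omega) (by omega)
      simpa [Nat.add_comm] using this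
  · intro h
    refine ⟨h 1 le_rfl (by omega), fun m hm1 hmk => ?_⟩
    have := h (m + 1) (by omega) (by omega)
    simpa using this

lemma shift_ev (A B : Set S) (k : ℕ) (hk : 1 ≤ k) :
    (fun ω : ℕ → S => fun n => ω (n + 1)) ⁻¹' ({ω : ℕ → S | ω 0 ∉ A} ∩ ev A B k)
      = ev A B (k + 1) := by
  have h : ∀ j, ({ω : ℕ → S | ω 0 ∉ A} ∩ ev A B j)
      = ((fun ω : ℕ → S => ω j) ⁻¹' B) ∩ ({ω : ℕ → S | ω 0 ∉ A} ∩ av A j) := by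
    intro j; ext ω; simp [ev, av, Set.mem_setOf_eq]; tauto
  rw [h, Set.preimage_inter, shift_av A k hk]
  ext ω; simp [ev, av]

end LECaux

section Part2
open MeasureTheory ProbabilityTheory Filter LECaux

variable {S : Type*} [MeasurableSpace S] [MeasurableSingletonClass S]

lemma integral_indicator_one {T : Set (ℕ → S)} (hT : MeasurableSet T)
    (μ : Measure (ℕ → S)) :
    ∫ ω, Set.indicator T (fun _ => (1 : ℂ)) ω ∂μ = ((μ T).toReal : ℂ) := by
  rw [integral_indicator_const (1 : ℂ) hT, Complex.real_smul, mul_one]; rfl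

lemma toReal_prob_le_one {μ : Measure (ℕ → S)} [IsProbabilityMeasure μ] (T : Set (ℕ → S)) :
    (μ T).toReal ≤ 1 := by
  have h := measure_mono (Set.subset_univ T) (μ := μ)
  rw [measure_univ] at h
  exact ENNReal.toReal_le_of_le_ofReal zero_le_one (by simpa using h)

lemma markov_step (P : Kernel S (ℕ → S)) [IsMarkovKernel P]
    (hMarkov : ∀ (x : S) (F : (ℕ → S) → ℂ), Measurable F → (∃ C, ∀ ω, ‖F ω‖ ≤ C) →
      ∫ ω, F (fun n => ω (n + 1)) ∂(P x) = ∫ ω, (∫ ω', F ω' ∂(P (ω 1))) ∂(P x))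
    {T : Set (ℕ → S)} (hT : MeasurableSet T) (x : S) :
    ((P x ((fun ω : ℕ → S => fun n => ω (n + 1)) ⁻¹' T)).toReal : ℂ)
      = ∫ ω, ((P (ω 1) T).toReal : ℂ) ∂(P x) := by
  have hθ : Measurable (fun ω : ℕ → S => fun n => ω (n + 1)) :=
    measurable_pi_lambda _ fun n => measurable_pi_apply (n + 1)
  have hF : Measurable (Set.indicator T (fun _ => (1 : ℂ))) := measurable_const.indicator hT
  have hbd : ∃ C, ∀ ω, ‖Set.indicator T (fun _ => (1 : ℂ)) ω‖ ≤ C :=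
    ⟨1, fun ω => by by_cases h : ω ∈ T <;> simp [h]⟩
  have key := hMarkov x _ hF hbd
  have hl : (fun ω : ℕ → S => Set.indicator T (fun _ => (1 : ℂ)) (fun n => ω (n + 1)))
      = Set.indicator ((fun ω : ℕ → S => fun n => ω (n + 1)) ⁻¹' T) (fun _ => (1 : ℂ)) := by
    funext ω
    by_cases h : (fun n => ω (n + 1)) ∈ T
    · rw [Set.indicator_of_mem h, Set.indicator_of_mem (by exact h)]
    · rw [Set.indicator_of_notMem h, Set.indicator_of_notMem (by exact h)]
  rw [hl] at key
  rw [integral_indicator_one (hθ hT) (P x)] at key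
  rw [key]
  congr 1
  funext ω
  exact integral_indicator_one hT (P (ω 1))

lemma start_inter_mem (P : Kernel S (ℕ → S)) [IsMarkovKernel P]
    (hStart : ∀ x : S, P x {ω | ω 0 = x} = 1)
    (T : Set (ℕ → S)) {A : Set S} {z : S} (hz : z ∈ A) :
    P z ({ω : ℕ → S | ω 0 ∉ A} ∩ T) = 0 := by
  have hX : MeasurableSet {ω : ℕ → S | ω 0 = z} := by
    have : {ω : ℕ → S | ω 0 = z} = (fun ω : ℕ → S => ω 0) ⁻¹' {z} := by
      ext ω; simp
    rw [this]; exact (measurable_pi_apply 0) (measurableSet_singleton z)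
  have hXc : P z {ω : ℕ → S | ω 0 = z}ᶜ = 0 :=
    (prob_compl_eq_zero_iff hX).2 (hStart z)
  refine measure_mono_null ?_ hXc
  rintro ω ⟨h1, _⟩ h2
  exact h1 (h2 ▸ hz)

lemma start_inter_not (P : Kernel S (ℕ → S)) [IsMarkovKernel P]
    (hStart : ∀ x : S, P x {ω | ω 0 = x} = 1)
    (T : Set (ℕ → S)) {A : Set S} {z : S} (hz : z ∉ A) :
    P z ({ω : ℕ → S | ω 0 ∉ A} ∩ T) = P z T := by
  have hX : MeasurableSet {ω : ℕ → S | ω 0 = z} := by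
    have : {ω : ℕ → S | ω 0 = z} = (fun ω : ℕ → S => ω 0) ⁻¹' {z} := by
      ext ω; simp
    rw [this]; exact (measurable_pi_apply 0) (measurableSet_singleton z)
  have hXc : P z {ω : ℕ → S | ω 0 = z}ᶜ = 0 :=
    (prob_compl_eq_zero_iff hX).2 (hStart z)
  have h1 : P z (T ∩ {ω : ℕ → S | ω 0 = z}) + P z (T \ {ω : ℕ → S | ω 0 = z}) = P z T :=
    measure_inter_add_diff T hX
  have h2 : P z (T \ {ω : ℕ → S | ω 0 = z}) = 0 :=
    measure_mono_null (fun ω h => h.2) hXc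
  have h3 : P z (T ∩ {ω : ℕ → S | ω 0 = z}) = P z T := by rw [← h1, h2, add_zero]
  refine le_antisymm (measure_mono Set.inter_subset_right) ?_
  calc P z T = P z (T ∩ {ω : ℕ → S | ω 0 = z}) := h3.symm
    _ ≤ P z ({ω : ℕ → S | ω 0 ∉ A} ∩ T) := by
        refine measure_mono ?_
        rintro ω ⟨h4, h5⟩
        exact ⟨by simp only [Set.mem_setOf_eq] at h5 ⊢; rw [h5]; exact hz, h4⟩

lemma meas_kernel_int (P : Kernel S (ℕ → S)) [IsMarkovKernel P] {ψ : S → ℝ}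
    (hψ : Measurable ψ) :
    StronglyMeasurable fun x => ∫ ω, ((ψ (ω 1) : ℝ) : ℂ) ∂(P x) :=
  StronglyMeasurable.integral_kernel_prod_right'
    (f := fun p : S × (ℕ → S) => ((ψ (p.2 1) : ℝ) : ℂ))
    ((Complex.measurable_ofReal.comp
      (hψ.comp ((measurable_pi_apply 1).comp measurable_snd))).stronglyMeasurable)

lemma integrable_bdd {α : Type*} [MeasurableSpace α] {μ : Measure α} [IsFiniteMeasure μ]
    {E : Type*} [NormedAddCommGroup E] {f : α → E}
    (hf : AEStronglyMeasurable f μ) {C : ℝ} (hC : ∀ ω, ‖f ω‖ ≤ C) : Integrable f μ :=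
  ⟨hf, HasFiniteIntegral.of_bounded (Filter.Eventually.of_forall hC)⟩

end Part2

section Part3
open MeasureTheory ProbabilityTheory Filter LECaux

variable {S : Type*} [MeasurableSpace S] [MeasurableSingletonClass S]

lemma markov_step_real (P : Kernel S (ℕ → S)) [IsMarkovKernel P]
    (hMarkov : ∀ (x : S) (F : (ℕ → S) → ℂ), Measurable F → (∃ C, ∀ ω, ‖F ω‖ ≤ C) →
      ∫ ω, F (fun n => ω (n + 1)) ∂(P x) = ∫ ω, (∫ ω', F ω' ∂(P (ω 1))) ∂(P x))
    {T : Set (ℕ → S)} (hT : MeasurableSet T) (x : S) :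
    (P x ((fun ω : ℕ → S => fun n => ω (n + 1)) ⁻¹' T)).toReal
      = ∫ ω, (P (ω 1) T).toReal ∂(P x) := by
  have h := markov_step P hMarkov hT x
  rw [show (∫ ω, ((P (ω 1) T).toReal : ℂ) ∂(P x))
      = ((∫ ω, (P (ω 1) T).toReal ∂(P x) : ℝ) : ℂ) from integral_ofReal] at h
  exact_mod_cast h

lemma meas_set0 {A : Set S} (hA : MeasurableSet A) :
    MeasurableSet {ω : ℕ → S | ω 0 ∉ A} := by
  have : {ω : ℕ → S | ω 0 ∉ A} = (fun ω : ℕ → S => ω 0) ⁻¹' Aᶜ := rfl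
  rw [this]; exact (measurable_pi_apply 0) hA.compl

lemma meas_set1 {A : Set S} (hA : MeasurableSet A) :
    MeasurableSet {ω : ℕ → S | ω 1 ∉ A} := by
  have : {ω : ℕ → S | ω 1 ∉ A} = (fun ω : ℕ → S => ω 1) ⁻¹' Aᶜ := rfl
  rw [this]; exact (measurable_pi_apply 1) hA.compl

lemma step_est (P : Kernel S (ℕ → S)) [IsMarkovKernel P]
    (hStart : ∀ x : S, P x {ω | ω 0 = x} = 1)
    (hMarkov : ∀ (x : S) (F : (ℕ → S) → ℂ), Measurable F → (∃ C, ∀ ω, ‖F ω‖ ≤ C) →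
      ∫ ω, F (fun n => ω (n + 1)) ∂(P x) = ∫ ω, (∫ ω', F ω' ∂(P (ω 1))) ∂(P x))
    {A : Set S} (hA : MeasurableSet A) {q : ℝ} (hq0 : 0 ≤ q) (j : ℕ)
    (hinner : ∀ z ∉ A, (P z (av A (j + 1))).toReal ≤ q ^ j) (x : S) :
    (P x (av A (j + 2))).toReal ≤ (P x {ω : ℕ → S | ω 1 ∉ A}).toReal * q ^ j := by
  have hT : MeasurableSet ({ω : ℕ → S | ω 0 ∉ A} ∩ av A (j + 1)) :=
    (meas_set0 hA).inter (meas_av hA (j + 1))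
  have hsh : (fun ω : ℕ → S => fun n => ω (n + 1)) ⁻¹'
      ({ω : ℕ → S | ω 0 ∉ A} ∩ av A (j + 1)) = av A (j + 1 + 1) :=
    shift_av A (j + 1) (by omega)
  have key : (P x (av A (j + 2))).toReal
      = ∫ ω, (P (ω 1) ({ω : ℕ → S | ω 0 ∉ A} ∩ av A (j + 1))).toReal ∂(P x) := by
    rw [← markov_step_real P hMarkov hT x, hsh]
  rw [key]
  have hbd : ∀ ω : ℕ → S,
      (P (ω 1) ({ω : ℕ → S | ω 0 ∉ A} ∩ av A (j + 1))).toReal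
        ≤ Set.indicator {ω : ℕ → S | ω 1 ∉ A} (fun _ => q ^ j) ω := by
    intro ω
    by_cases h : ω 1 ∈ A
    · rw [start_inter_mem P hStart _ h]
      have : ω ∉ {ω : ℕ → S | ω 1 ∉ A} := by simp [h]
      rw [Set.indicator_of_notMem this]; simp
    · rw [start_inter_not P hStart _ h,
        Set.indicator_of_mem (by exact h : ω ∈ {ω : ℕ → S | ω 1 ∉ A})]
      exact hinner (ω 1) h
  have hint1 : Integrable
      (fun ω => (P (ω 1) ({ω : ℕ → S | ω 0 ∉ A} ∩ av A (j + 1))).toReal) (P x) := by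
    refine integrable_bdd ?_ (C := 1) ?_
    · exact ((P.measurable_coe hT).ennreal_toReal.comp
        (measurable_pi_apply 1)).aestronglyMeasurable
    · intro ω
      rw [Real.norm_of_nonneg ENNReal.toReal_nonneg]
      exact toReal_prob_le_one _
  have hint2 : Integrable
      (Set.indicator {ω : ℕ → S | ω 1 ∉ A} (fun _ => q ^ j)) (P x) :=
    (integrable_const _).indicator (meas_set1 hA)
  calc ∫ ω, (P (ω 1) ({ω : ℕ → S | ω 0 ∉ A} ∩ av A (j + 1))).toReal ∂(P x)
      ≤ ∫ ω, Set.indicator {ω : ℕ → S | ω 1 ∉ A} (fun _ => q ^ j) ω ∂(P x) :=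
        integral_mono hint1 hint2 hbd
    _ = (P x {ω : ℕ → S | ω 1 ∉ A}).toReal * q ^ j := by
        rw [integral_indicator_const _ (meas_set1 hA)]; simp [smul_eq_mul, measureReal_def]

lemma avoid_bound_out (P : Kernel S (ℕ → S)) [IsMarkovKernel P]
    (hStart : ∀ x : S, P x {ω | ω 0 = x} = 1)
    (hMarkov : ∀ (x : S) (F : (ℕ → S) → ℂ), Measurable F → (∃ C, ∀ ω, ‖F ω‖ ≤ C) →
      ∫ ω, F (fun n => ω (n + 1)) ∂(P x) = ∫ ω, (∫ ω', F ω' ∂(P (ω 1))) ∂(P x))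
    {A : Set S} (hA : MeasurableSet A) {q : ℝ} (hq0 : 0 ≤ q)
    (hq : ∀ x ∉ A, (P x {ω | ω 1 ∉ A}).toReal ≤ q) :
    ∀ j, ∀ y ∉ A, (P y (av A (j + 1))).toReal ≤ q ^ j := by
  intro j
  induction j with
  | zero =>
    intro y _
    rw [av_one, measure_univ]
    simp
  | succ j ih =>
    intro y hy
    have h1 := step_est P hStart hMarkov hA hq0 j ih y
    have h2 : (P y {ω : ℕ → S | ω 1 ∉ A}).toReal * q ^ j ≤ q * q ^ j :=
      mul_le_mul_of_nonneg_right (hq y hy) (pow_nonneg hq0 j)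
    calc (P y (av A (j + 1 + 1))).toReal ≤ q * q ^ j := le_trans h1 h2
      _ = q ^ (j + 1) := by ring

lemma ev_bound (P : Kernel S (ℕ → S)) [IsMarkovKernel P]
    (hStart : ∀ x : S, P x {ω | ω 0 = x} = 1)
    (hMarkov : ∀ (x : S) (F : (ℕ → S) → ℂ), Measurable F → (∃ C, ∀ ω, ‖F ω‖ ≤ C) →
      ∫ ω, F (fun n => ω (n + 1)) ∂(P x) = ∫ ω, (∫ ω', F ω' ∂(P (ω 1))) ∂(P x))
    {A B : Set S} (hA : MeasurableSet A) {q : ℝ} (hq0 : 0 ≤ q)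
    (hq : ∀ x ∉ A, (P x {ω | ω 1 ∉ A}).toReal ≤ q) :
    ∀ j x, (P x (ev A B (j + 2))).toReal ≤ q ^ j := by
  intro j x
  have h1 : (P x (ev A B (j + 2))).toReal ≤ (P x (av A (j + 2))).toReal :=
    ENNReal.toReal_mono (measure_ne_top _ _) (measure_mono (ev_subset_av A B (j + 2)))
  have h2 := step_est P hStart hMarkov hA hq0 j
    (avoid_bound_out P hStart hMarkov hA hq0 hq j) x
  have h3 : (P x {ω : ℕ → S | ω 1 ∉ A}).toReal * q ^ j ≤ 1 * q ^ j :=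
    mul_le_mul_of_nonneg_right (toReal_prob_le_one _) (pow_nonneg hq0 j)
  calc (P x (ev A B (j + 2))).toReal ≤ (P x {ω : ℕ → S | ω 1 ∉ A}).toReal * q ^ j :=
        le_trans h1 h2
    _ ≤ q ^ j := by rw [one_mul] at h3; exact h3

end Part3

section Part4
open MeasureTheory ProbabilityTheory Filter LECaux

variable {S : Type*} [MeasurableSpace S] [MeasurableSingletonClass S]

lemma integrable_pi_mul (ν : Measure S) {π : S → ℂ} (hπint : Integrable π ν)
    {g : S → ℂ} (hg : AEStronglyMeasurable g ν) {C : ℝ} (hC : ∀ x, ‖g x‖ ≤ C) :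
    Integrable (fun x => π x * g x) ν := by
  refine Integrable.mono' (hπint.norm.const_mul C) (hπint.aestronglyMeasurable.mul hg) ?_
  filter_upwards with x
  rw [norm_mul]
  calc ‖π x‖ * ‖g x‖ ≤ ‖π x‖ * C := mul_le_mul_of_nonneg_left (hC x) (norm_nonneg _)
    _ = C * ‖π x‖ := mul_comm _ _

lemma eigen_simple (P : Kernel S (ℕ → S)) [IsMarkovKernel P] (ν : Measure S)
    (π : S → ℂ) (hπint : Integrable π ν) (u : ℂ)
    (heigen : ∀ B : Set S, MeasurableSet B →
      ∫ x, π x * ((P x {ω | ω 1 ∈ B}).toReal : ℂ) ∂ν = Complex.exp (-u) * ∫ x in B, π x ∂ν)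
    (s : SimpleFunc S ℝ) :
    ∫ x, π x * (∫ ω, ((s (ω 1) : ℝ) : ℂ) ∂(P x)) ∂ν
      = Complex.exp (-u) * ∫ x, π x * ((s x : ℝ) : ℂ) ∂ν := by
  induction s using SimpleFunc.induction with
  | const c hs =>
    rename_i t
    have hcoe : ∀ y, ((SimpleFunc.piecewise t hs (SimpleFunc.const S c)
        (SimpleFunc.const S 0)) y : ℂ) = Set.indicator t (fun _ => (c : ℂ)) y := by
      intro y
      by_cases h : y ∈ t <;>
        simp [SimpleFunc.piecewise_apply, h, Set.indicator_of_mem, Set.indicator_of_notMem]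
    have hinner : ∀ x : S, ∫ ω, ((SimpleFunc.piecewise t hs (SimpleFunc.const S c)
        (SimpleFunc.const S 0)) (ω 1) : ℂ) ∂(P x)
          = ((P x {ω : ℕ → S | ω 1 ∈ t}).toReal : ℂ) * c := by
      intro x
      have : (fun ω : ℕ → S => ((SimpleFunc.piecewise t hs (SimpleFunc.const S c)
          (SimpleFunc.const S 0)) (ω 1) : ℂ))
          = Set.indicator {ω : ℕ → S | ω 1 ∈ t} (fun _ => (c : ℂ)) := by
        funext ω
        rw [hcoe (ω 1)]
        by_cases h : ω 1 ∈ t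
        · rw [Set.indicator_of_mem h, Set.indicator_of_mem (by exact h)]
        · rw [Set.indicator_of_notMem h, Set.indicator_of_notMem (by exact h)]
      rw [this, integral_indicator_const (c : ℂ)
        (show MeasurableSet {ω : ℕ → S | ω 1 ∈ t} from (measurable_pi_apply 1) hs),
        Complex.real_smul]; rfl
    calc ∫ x, π x * (∫ ω, ((SimpleFunc.piecewise t hs (SimpleFunc.const S c)
            (SimpleFunc.const S 0)) (ω 1) : ℂ)  ∂(P x)) ∂ν
        = ∫ x, (π x * ((P x {ω : ℕ → S | ω 1 ∈ t}).toReal : ℂ)) * c ∂ν := by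
          congr 1; funext x; rw [hinner x]; ring
      _ = (∫ x, π x * ((P x {ω : ℕ → S | ω 1 ∈ t}).toReal : ℂ) ∂ν) * c :=
          integral_mul_const (c : ℂ) _
      _ = (Complex.exp (-u) * ∫ x in t, π x ∂ν) * c := by rw [heigen t hs]
      _ = Complex.exp (-u) * ((∫ x in t, π x ∂ν) * c) := by ring
      _ = Complex.exp (-u) * ∫ x, π x * ((SimpleFunc.piecewise t hs (SimpleFunc.const S c)
            (SimpleFunc.const S 0)) x : ℂ) ∂ν := by
          congr 1
          have : (fun x => π x * ((SimpleFunc.piecewise t hs (SimpleFunc.const S c)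
              (SimpleFunc.const S 0)) x : ℂ)) = Set.indicator t (fun x => π x * c) := by
            funext x
            rw [hcoe x]
            by_cases h : x ∈ t
            · rw [Set.indicator_of_mem h, Set.indicator_of_mem h]
            · rw [Set.indicator_of_notMem h, Set.indicator_of_notMem h, mul_zero]
          rw [this, integral_indicator hs, integral_mul_const]
  | add hdisj hf hg =>
    rename_i f g
    obtain ⟨Cf, hCf⟩ := f.exists_forall_norm_le
    obtain ⟨Cg, hCg⟩ := g.exists_forall_norm_le
    have hintf : ∀ x : S, Integrable (fun ω : ℕ → S => ((f (ω 1) : ℝ) : ℂ)) (P x) := by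
      intro x
      refine integrable_bdd ((Complex.measurable_ofReal.comp
        (f.measurable.comp (measurable_pi_apply 1))).aestronglyMeasurable) (C := Cf) ?_
      intro ω; rw [Complex.norm_real]; exact hCf (ω 1)
    have hintg : ∀ x : S, Integrable (fun ω : ℕ → S => ((g (ω 1) : ℝ) : ℂ)) (P x) := by
      intro x
      refine integrable_bdd ((Complex.measurable_ofReal.comp
        (g.measurable.comp (measurable_pi_apply 1))).aestronglyMeasurable) (C := Cg) ?_
      intro ω; rw [Complex.norm_real]; exact hCg (ω 1)
    have hsplit : ∀ x : S, ∫ ω, (((f + g) (ω 1) : ℝ) : ℂ) ∂(P x)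
        = (∫ ω, ((f (ω 1) : ℝ) : ℂ) ∂(P x)) + ∫ ω, ((g (ω 1) : ℝ) : ℂ) ∂(P x) := by
      intro x
      rw [← integral_add (hintf x) (hintg x)]
      congr 1; funext ω
      simp [Complex.ofReal_add]
    have hmf : AEStronglyMeasurable (fun x => ∫ ω, ((f (ω 1) : ℝ) : ℂ) ∂(P x)) ν :=
      (meas_kernel_int P f.measurable).aestronglyMeasurable
    have hmg : AEStronglyMeasurable (fun x => ∫ ω, ((g (ω 1) : ℝ) : ℂ) ∂(P x)) ν :=
      (meas_kernel_int P g.measurable).aestronglyMeasurable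
    have hbf : ∀ x, ‖∫ ω, ((f (ω 1) : ℝ) : ℂ) ∂(P x)‖ ≤ max Cf 0 := by
      intro x
      have h1 : ∀ᵐ ω ∂(P x), ‖((f (ω 1) : ℝ) : ℂ)‖ ≤ max Cf 0 := by
        filter_upwards with ω
        rw [Complex.norm_real]
        exact le_trans (hCf (ω 1)) (le_max_left _ _)
      calc ‖∫ ω, ((f (ω 1) : ℝ) : ℂ) ∂(P x)‖ ≤ max Cf 0 * ((P x) Set.univ).toReal :=
            norm_integral_le_of_norm_le_const h1
        _ = max Cf 0 := by rw [measure_univ]; simp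
    have hbg : ∀ x, ‖∫ ω, ((g (ω 1) : ℝ) : ℂ) ∂(P x)‖ ≤ max Cg 0 := by
      intro x
      have h1 : ∀ᵐ ω ∂(P x), ‖((g (ω 1) : ℝ) : ℂ)‖ ≤ max Cg 0 := by
        filter_upwards with ω
        rw [Complex.norm_real]
        exact le_trans (hCg (ω 1)) (le_max_left _ _)
      calc ‖∫ ω, ((g (ω 1) : ℝ) : ℂ) ∂(P x)‖ ≤ max Cg 0 * ((P x) Set.univ).toReal :=
            norm_integral_le_of_norm_le_const h1
        _ = max Cg 0 := by rw [measure_univ]; simp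
    have hIf : Integrable (fun x => π x * ∫ ω, ((f (ω 1) : ℝ) : ℂ) ∂(P x)) ν :=
      integrable_pi_mul ν hπint hmf hbf
    have hIg : Integrable (fun x => π x * ∫ ω, ((g (ω 1) : ℝ) : ℂ) ∂(P x)) ν :=
      integrable_pi_mul ν hπint hmg hbg
    have hJf : Integrable (fun x => π x * ((f x : ℝ) : ℂ)) ν := by
      refine integrable_pi_mul ν hπint ((Complex.measurable_ofReal.comp
        f.measurable).aestronglyMeasurable) (C := Cf) ?_
      intro x; rw [Complex.norm_real]; exact hCf x
    have hJg : Integrable (fun x => π x * ((g x : ℝ) : ℂ)) ν := by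
      refine integrable_pi_mul ν hπint ((Complex.measurable_ofReal.comp
        g.measurable).aestronglyMeasurable) (C := Cg) ?_
      intro x; rw [Complex.norm_real]; exact hCg x
    calc ∫ x, π x * (∫ ω, (((f + g) (ω 1) : ℝ) : ℂ) ∂(P x)) ∂ν
        = ∫ x, (π x * ∫ ω, ((f (ω 1) : ℝ) : ℂ) ∂(P x))
            + (π x * ∫ ω, ((g (ω 1) : ℝ) : ℂ) ∂(P x)) ∂ν := by
          congr 1; funext x; rw [hsplit x]; ring
      _ = (∫ x, π x * ∫ ω, ((f (ω 1) : ℝ) : ℂ) ∂(P x) ∂ν)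
            + ∫ x, π x * ∫ ω, ((g (ω 1) : ℝ) : ℂ) ∂(P x) ∂ν := integral_add hIf hIg
      _ = Complex.exp (-u) * ((∫ x, π x * ((f x : ℝ) : ℂ) ∂ν)
            + ∫ x, π x * ((g x : ℝ) : ℂ) ∂ν) := by rw [hf, hg]; ring
      _ = Complex.exp (-u) * ∫ x, π x * (((f + g) x : ℝ) : ℂ) ∂ν := by
          congr 1
          rw [← integral_add hJf hJg]
          congr 1; funext x
          simp [Complex.ofReal_add]; ring

end Part4

section Part5
open MeasureTheory ProbabilityTheory Filter Topology LECaux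

variable {S : Type*} [MeasurableSpace S] [MeasurableSingletonClass S]

lemma eigen_ext (P : Kernel S (ℕ → S)) [IsMarkovKernel P] (ν : Measure S)
    (π : S → ℂ) (hπint : Integrable π ν) (u : ℂ)
    (heigen : ∀ B : Set S, MeasurableSet B →
      ∫ x, π x * ((P x {ω | ω 1 ∈ B}).toReal : ℂ) ∂ν = Complex.exp (-u) * ∫ x in B, π x ∂ν)
    (φ : S → ℝ) (hφ : Measurable φ) (h0 : ∀ y, 0 ≤ φ y) (h1 : ∀ y, φ y ≤ 1) :
    ∫ x, π x * (∫ ω, ((φ (ω 1) : ℝ) : ℂ) ∂(P x)) ∂ν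
      = Complex.exp (-u) * ∫ x, π x * ((φ x : ℝ) : ℂ) ∂ν := by
  have h00 : (0 : ℝ) ∈ (Set.univ : Set ℝ) := Set.mem_univ 0
  set s : ℕ → SimpleFunc S ℝ := fun n => SimpleFunc.approxOn φ hφ Set.univ 0 h00 n with hs
  have htend : ∀ x, Tendsto (fun n => s n x) atTop (𝓝 (φ x)) := fun x =>
    SimpleFunc.tendsto_approxOn hφ h00 (by simp)
  have hbnd : ∀ n x, ‖s n x‖ ≤ 2 := by
    intro n x
    have h3 := SimpleFunc.norm_approxOn_zero_le hφ h00 x n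
    have h2 : ‖φ x‖ ≤ 1 := by rw [Real.norm_of_nonneg (h0 x)]; exact h1 x
    simpa using le_trans h3 (by linarith)
  have hinner : ∀ x, Tendsto (fun n => ∫ ω, ((s n (ω 1) : ℝ) : ℂ) ∂(P x)) atTop
      (𝓝 (∫ ω, ((φ (ω 1) : ℝ) : ℂ) ∂(P x))) := by
    intro x
    refine tendsto_integral_of_dominated_convergence (fun _ => 2)
      (fun n => (Complex.measurable_ofReal.comp (((s n).measurable).comp
        (measurable_pi_apply 1) : Measurable fun ω : ℕ → S => s n (ω 1))).aestronglyMeasurable)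
      (integrable_const 2) (fun n => Filter.Eventually.of_forall fun ω => ?_)
      (Filter.Eventually.of_forall fun ω => ?_)
    · rw [Complex.norm_real]; exact hbnd n (ω 1)
    · exact (Complex.continuous_ofReal.tendsto _).comp (htend (ω 1))
  have hnormint : ∀ n x, ‖∫ ω, ((s n (ω 1) : ℝ) : ℂ) ∂(P x)‖ ≤ 2 := by
    intro n x
    calc ‖∫ ω, ((s n (ω 1) : ℝ) : ℂ) ∂(P x)‖ ≤ 2 * ((P x) Set.univ).toReal :=
          norm_integral_le_of_norm_le_const (Filter.Eventually.of_forall fun ω => by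
            rw [Complex.norm_real]; exact hbnd n (ω 1))
      _ = 2 := by rw [measure_univ]; simp
  have hL : Tendsto (fun n => ∫ x, π x * (∫ ω, ((s n (ω 1) : ℝ) : ℂ) ∂(P x)) ∂ν) atTop
      (𝓝 (∫ x, π x * (∫ ω, ((φ (ω 1) : ℝ) : ℂ) ∂(P x)) ∂ν)) := by
    refine tendsto_integral_of_dominated_convergence (fun x => 2 * ‖π x‖)
      (fun n => hπint.aestronglyMeasurable.mul
        (meas_kernel_int P (s n).measurable).aestronglyMeasurable)
      (hπint.norm.const_mul 2) (fun n => Filter.Eventually.of_forall fun x => ?_)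
      (Filter.Eventually.of_forall fun x => ?_)
    · rw [norm_mul]
      calc ‖π x‖ * ‖∫ ω, ((s n (ω 1) : ℝ) : ℂ) ∂(P x)‖ ≤ ‖π x‖ * 2 :=
            mul_le_mul_of_nonneg_left (hnormint n x) (norm_nonneg _)
        _ = 2 * ‖π x‖ := mul_comm _ _
    · exact Tendsto.const_mul (π x) (hinner x)
  have hR : Tendsto (fun n => ∫ x, π x * ((s n x : ℝ) : ℂ) ∂ν) atTop
      (𝓝 (∫ x, π x * ((φ x : ℝ) : ℂ) ∂ν)) := by
    refine tendsto_integral_of_dominated_convergence (fun x => 2 * ‖π x‖)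
      (fun n => hπint.aestronglyMeasurable.mul (Complex.measurable_ofReal.comp
        (s n).measurable).aestronglyMeasurable)
      (hπint.norm.const_mul 2) (fun n => Filter.Eventually.of_forall fun x => ?_)
      (Filter.Eventually.of_forall fun x => ?_)
    · rw [norm_mul]
      calc ‖π x‖ * ‖((s n x : ℝ) : ℂ)‖ ≤ ‖π x‖ * 2 := by
            refine mul_le_mul_of_nonneg_left ?_ (norm_nonneg _)
            rw [Complex.norm_real]; exact hbnd n x
        _ = 2 * ‖π x‖ := mul_comm _ _
    · exact Tendsto.const_mul (π x)
        ((Complex.continuous_ofReal.tendsto _).comp (htend x))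
  have heq : ∀ n, ∫ x, π x * (∫ ω, ((s n (ω 1) : ℝ) : ℂ) ∂(P x)) ∂ν
      = Complex.exp (-u) * ∫ x, π x * ((s n x : ℝ) : ℂ) ∂ν := fun n =>
    eigen_simple P ν π hπint u heigen (s n)
  have hL' : Tendsto (fun n => ∫ x, π x * (∫ ω, ((s n (ω 1) : ℝ) : ℂ) ∂(P x)) ∂ν) atTop
      (𝓝 (Complex.exp (-u) * ∫ x, π x * ((φ x : ℝ) : ℂ) ∂ν)) := by
    simp only [heq]
    exact Tendsto.const_mul _ hR
  exact tendsto_nhds_unique hL hL'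

end Part5

section Part6
open MeasureTheory ProbabilityTheory Filter Topology LECaux

variable {S : Type*} [MeasurableSpace S] [MeasurableSingletonClass S]

lemma c_recursion (P : Kernel S (ℕ → S)) [IsMarkovKernel P] (ν : Measure S)
    (hStart : ∀ x : S, P x {ω | ω 0 = x} = 1)
    (hMarkov : ∀ (x : S) (F : (ℕ → S) → ℂ), Measurable F → (∃ C, ∀ ω, ‖F ω‖ ≤ C) →
      ∫ ω, F (fun n => ω (n + 1)) ∂(P x) = ∫ ω, (∫ ω', F ω' ∂(P (ω 1))) ∂(P x))
    (π : S → ℂ) (hπint : Integrable π ν) (u : ℂ)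
    (heigen : ∀ B : Set S, MeasurableSet B →
      ∫ x, π x * ((P x {ω | ω 1 ∈ B}).toReal : ℂ) ∂ν = Complex.exp (-u) * ∫ x in B, π x ∂ν)
    {A B : Set S} (hA : MeasurableSet A) (hB : MeasurableSet B)
    (k : ℕ) (hk : 1 ≤ k) :
    ∫ x, π x * ((P x (ev A B (k + 1))).toReal : ℂ) ∂ν
      = Complex.exp (-u) * ((∫ x, π x * ((P x (ev A B k)).toReal : ℂ) ∂ν)
          - ∫ x in A, π x * ((P x (ev A B k)).toReal : ℂ) ∂ν) := by
  set ψ : S → ℝ := fun z => (P z ({ω : ℕ → S | ω 0 ∉ A} ∩ ev A B k)).toReal with hψdef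
  have hψm : Measurable ψ :=
    (P.measurable_coe ((meas_set0 hA).inter (meas_ev hA hB k))).ennreal_toReal
  have hψ0 : ∀ y, 0 ≤ ψ y := fun y => ENNReal.toReal_nonneg
  have hψ1 : ∀ y, ψ y ≤ 1 := fun y => toReal_prob_le_one _
  have hrec : ∀ x : S, ((P x (ev A B (k + 1))).toReal : ℂ)
      = ∫ ω, ((ψ (ω 1) : ℝ) : ℂ) ∂(P x) := by
    intro x
    rw [← shift_ev A B k hk,
      markov_step P hMarkov ((meas_set0 hA).inter (meas_ev hA hB k)) x]
  have step1 : ∫ x, π x * ((P x (ev A B (k + 1))).toReal : ℂ) ∂ν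
      = ∫ x, π x * (∫ ω, ((ψ (ω 1) : ℝ) : ℂ) ∂(P x)) ∂ν := by
    congr 1; funext x; rw [hrec x]
  rw [step1, eigen_ext P ν π hπint u heigen ψ hψm hψ0 hψ1]
  congr 1
  have hpoint : (fun x => π x * ((ψ x : ℝ) : ℂ))
      = fun x => Set.indicator Aᶜ (fun z => π z * ((P z (ev A B k)).toReal : ℂ)) x := by
    funext z
    by_cases hz : z ∈ A
    · have h1 : ψ z = 0 := by
        rw [hψdef]; simp only; rw [start_inter_mem P hStart _ hz]; simp
      rw [h1, Set.indicator_of_notMem (by simpa using hz)]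
      simp
    · have h1 : ψ z = (P z (ev A B k)).toReal := by
        rw [hψdef]; simp only; rw [start_inter_not P hStart _ hz]
      rw [h1, Set.indicator_of_mem (by simpa using hz)]
  rw [hpoint, integral_indicator hA.compl]
  have hint : Integrable (fun x => π x * ((P x (ev A B k)).toReal : ℂ)) ν := by
    refine integrable_pi_mul ν hπint ((Complex.measurable_ofReal.comp
      (P.measurable_coe (meas_ev hA hB k)).ennreal_toReal).aestronglyMeasurable) (C := 1) ?_
    intro x; rw [Complex.norm_real, Real.norm_of_nonneg ENNReal.toReal_nonneg]
    exact toReal_prob_le_one _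
  have hsplit := integral_add_compl hA hint
  rw [← hsplit]; ring

end Part6


section Part7
open MeasureTheory ProbabilityTheory Filter Topology LECaux

variable {S : Type*} [MeasurableSpace S] [MeasurableSingletonClass S]

lemma mem_ev_retTime {A B : Set S} (hBA : B ⊆ A) {ω : ℕ → S} {n : ℕ}
    (h : ω ∈ ev A B (n + 1)) : retTime A ω = n + 1 := by
  have hmem : (n + 1) ∈ {m : ℕ | 1 ≤ m ∧ ω m ∈ A} := ⟨by omega, hBA h.1⟩
  refine le_antisymm (Nat.sInf_le hmem) (le_csInf ⟨_, hmem⟩ ?_)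
  intro m hm
  by_contra hlt
  push_neg at hlt
  exact h.2 m hm.1 (by omega) hm.2

lemma exp_norm_pow (u : ℂ) (n : ℕ) : ‖Complex.exp (u * (n : ℂ))‖ = ‖Complex.exp u‖ ^ n := by
  rw [show u * (n : ℂ) = (n : ℂ) * u from mul_comm _ _, Complex.exp_nat_mul, norm_pow]

lemma indicator_tsum {A B : Set S} (hBA : B ⊆ A) (u : ℂ) (ω : ℕ → S) :
    Set.indicator {ω' : ℕ → S | ∃ n, 1 ≤ n ∧ ω' n ∈ B ∧ ∀ m, 1 ≤ m → m < n → ω' m ∉ A}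
      (fun ω' => Complex.exp (u * ((retTime A ω' : ℂ) - 1))) ω
    = ∑' n : ℕ, Set.indicator (ev A B (n + 1)) (fun _ => Complex.exp (u * (n : ℂ))) ω := by
  by_cases hω : ω ∈ {ω' : ℕ → S | ∃ n, 1 ≤ n ∧ ω' n ∈ B ∧ ∀ m, 1 ≤ m → m < n → ω' m ∉ A}
  · have hω' := hω
    obtain ⟨n, hn1, hnB, hnav⟩ := hω'
    obtain ⟨n', rfl⟩ : ∃ n', n = n' + 1 := ⟨n - 1, by omega⟩
    have hev : ω ∈ ev A B (n' + 1) := ⟨hnB, hnav⟩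
    rw [Set.indicator_of_mem hω]
    rw [tsum_eq_single n' ?_]
    · rw [Set.indicator_of_mem hev, mem_ev_retTime hBA hev]
      congr 1
      push_cast
      ring
    · intro m hm
      refine Set.indicator_of_notMem (fun hmem => ?_) _
      rcases lt_or_gt_of_ne hm with hlt | hgt
      · exact hnav (m + 1) (by omega) (by omega) (hBA hmem.1)
      · exact hmem.2 (n' + 1) (by omega) (by omega) (hBA hnB)
  · rw [Set.indicator_of_notMem hω]
    symm
    have hz : ∀ n : ℕ, Set.indicator (ev A B (n + 1))
        (fun _ => Complex.exp (u * (n : ℂ))) ω = 0 := fun n =>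
      Set.indicator_of_notMem (fun hmem => hω ⟨n + 1, by omega, hmem.1, hmem.2⟩) _
    simp [hz]

lemma inner_integral (P : Kernel S (ℕ → S)) [IsMarkovKernel P]
    (hStart : ∀ x : S, P x {ω | ω 0 = x} = 1)
    (hMarkov : ∀ (x : S) (F : (ℕ → S) → ℂ), Measurable F → (∃ C, ∀ ω, ‖F ω‖ ≤ C) →
      ∫ ω, F (fun n => ω (n + 1)) ∂(P x) = ∫ ω, (∫ ω', F ω' ∂(P (ω 1))) ∂(P x))
    {A B : Set S} (hA : MeasurableSet A) (hB : MeasurableSet B) (hBA : B ⊆ A)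
    {q : ℝ} (hq0 : 0 ≤ q) (hq : ∀ x ∉ A, (P x {ω | ω 1 ∉ A}).toReal ≤ q) (u : ℂ)
    (hr : q * ‖Complex.exp u‖ < 1) (x : S) :
    ∫ ω, Set.indicator {ω' : ℕ → S | ∃ n, 1 ≤ n ∧ ω' n ∈ B ∧ ∀ m, 1 ≤ m → m < n → ω' m ∉ A}
        (fun ω' => Complex.exp (u * ((retTime A ω' : ℂ) - 1))) ω ∂(P x)
      = ∑' n : ℕ, Complex.exp (u * (n : ℂ)) * ((P x (ev A B (n + 1))).toReal : ℂ) := by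
  have hpt : (fun ω => Set.indicator
      {ω' : ℕ → S | ∃ n, 1 ≤ n ∧ ω' n ∈ B ∧ ∀ m, 1 ≤ m → m < n → ω' m ∉ A}
      (fun ω' => Complex.exp (u * ((retTime A ω' : ℂ) - 1))) ω)
      = fun ω => ∑' n : ℕ, Set.indicator (ev A B (n + 1))
          (fun _ => Complex.exp (u * (n : ℂ))) ω := funext (indicator_tsum hBA u)
  rw [hpt]
  have hFint : ∀ n : ℕ, Integrable
      (Set.indicator (ev A B (n + 1)) (fun _ => Complex.exp (u * (n : ℂ)))) (P x) :=
    fun n => (integrable_const _).indicator (meas_ev hA hB (n + 1))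
  have hval : ∀ n : ℕ, (∫ ω, ‖Set.indicator (ev A B (n + 1))
      (fun _ => Complex.exp (u * (n : ℂ))) ω‖ ∂(P x))
      = (P x (ev A B (n + 1))).toReal * ‖Complex.exp u‖ ^ n := by
    intro n
    have h1 : (fun ω => ‖Set.indicator (ev A B (n + 1))
        (fun _ => Complex.exp (u * (n : ℂ))) ω‖)
        = Set.indicator (ev A B (n + 1)) (fun _ => ‖Complex.exp (u * (n : ℂ))‖) := by
      funext ω
      rw [← norm_indicator_eq_indicator_norm]
    rw [h1, integral_indicator_const _ (meas_ev hA hB (n + 1)), smul_eq_mul, exp_norm_pow]; rfl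
  have hFsum : Summable fun n : ℕ => ∫ ω, ‖Set.indicator (ev A B (n + 1))
      (fun _ => Complex.exp (u * (n : ℂ))) ω‖ ∂(P x) := by
    refine (summable_nat_add_iff 1).1 ?_
    refine Summable.of_nonneg_of_le (fun n => integral_nonneg fun ω => norm_nonneg _)
      (fun n => ?_)
      (((summable_geometric_of_lt_one (by positivity) hr).mul_left ‖Complex.exp u‖))
    rw [hval (n + 1)]
    have h2 : (P x (ev A B (n + 1 + 1))).toReal ≤ q ^ n :=
      ev_bound P hStart hMarkov hA hq0 hq n x
    calc (P x (ev A B (n + 1 + 1))).toReal * ‖Complex.exp u‖ ^ (n + 1)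
        ≤ q ^ n * ‖Complex.exp u‖ ^ (n + 1) :=
          mul_le_mul_of_nonneg_right h2 (by positivity)
      _ = ‖Complex.exp u‖ * (q * ‖Complex.exp u‖) ^ n := by ring
  rw [← integral_tsum_of_summable_integral_norm hFint hFsum]
  congr 1
  funext n
  rw [integral_indicator_const _ (meas_ev hA hB (n + 1)), Complex.real_smul, mul_comm]; rfl

end Part7

section Part8
open MeasureTheory ProbabilityTheory Filter Topology LECaux

variable {S : Type*} [MeasurableSpace S] [MeasurableSingletonClass S]

namespace LECaux

noncomputable def hfun (P : Kernel S (ℕ → S)) (A B : Set S) (k : ℕ) (x : S) : ℝ :=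
  (P x (ev A B k)).toReal

noncomputable def cval (P : Kernel S (ℕ → S)) (ν : Measure S) (π : S → ℂ)
    (A B : Set S) (k : ℕ) : ℂ :=
  ∫ x, π x * ((hfun P A B k x : ℝ) : ℂ) ∂ν

noncomputable def gval (P : Kernel S (ℕ → S)) (ν : Measure S) (π : S → ℂ)
    (A B : Set S) (k : ℕ) : ℂ :=
  ∫ x in A, π x * ((hfun P A B k x : ℝ) : ℂ) ∂ν

end LECaux

lemma norm_setint_bound (ν : Measure S) {π : S → ℂ} (hπint : Integrable π ν)
    {f : S → ℝ} (hf : Measurable f) (h0 : ∀ x, 0 ≤ f x) {b : ℝ} (hb : 0 ≤ b)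
    (hfb : ∀ x, f x ≤ b) (s : Set S) :
    ‖∫ x in s, π x * ((f x : ℝ) : ℂ) ∂ν‖ ≤ b * ∫ x, ‖π x‖ ∂ν := by
  have hintf : Integrable (fun x => π x * ((f x : ℝ) : ℂ)) (ν.restrict s) := by
    refine integrable_pi_mul (ν.restrict s) hπint.restrict
      ((Complex.measurable_ofReal.comp hf).aestronglyMeasurable) (C := b) ?_
    intro x; rw [Complex.norm_real, Real.norm_of_nonneg (h0 x)]; exact hfb x
  have h1 : ∀ x, ‖π x * ((f x : ℝ) : ℂ)‖ ≤ ‖π x‖ * b := by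
    intro x
    rw [norm_mul, Complex.norm_real, Real.norm_of_nonneg (h0 x)]
    exact mul_le_mul_of_nonneg_left (hfb x) (norm_nonneg _)
  calc ‖∫ x in s, π x * ((f x : ℝ) : ℂ) ∂ν‖
      ≤ ∫ x in s, ‖π x * ((f x : ℝ) : ℂ)‖ ∂ν := norm_integral_le_integral_norm _
    _ ≤ ∫ x in s, ‖π x‖ * b ∂ν :=
        integral_mono hintf.norm ((hπint.norm.mul_const b).restrict) h1
    _ = (∫ x in s, ‖π x‖ ∂ν) * b := integral_mul_const b _
    _ ≤ (∫ x, ‖π x‖ ∂ν) * b := by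
        refine mul_le_mul_of_nonneg_right ?_ hb
        exact setIntegral_le_integral hπint.norm
          (Filter.Eventually.of_forall fun x => norm_nonneg _)
    _ = b * ∫ x, ‖π x‖ ∂ν := mul_comm _ _

lemma key_theorem
    (P : Kernel S (ℕ → S)) [IsMarkovKernel P]
    (ν : Measure S)
    (hStart : ∀ x : S, P x {ω | ω 0 = x} = 1)
    (hMarkov : ∀ (x : S) (F : (ℕ → S) → ℂ), Measurable F → (∃ C, ∀ ω, ‖F ω‖ ≤ C) →
      ∫ ω, F (fun n => ω (n + 1)) ∂(P x) = ∫ ω, (∫ ω', F ω' ∂(P (ω 1))) ∂(P x))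
    (π : S → ℂ) (hπint : Integrable π ν)
    (u : ℂ)
    (heigen : ∀ B : Set S, MeasurableSet B →
      ∫ x, π x * ((P x {ω | ω 1 ∈ B}).toReal : ℂ) ∂ν = Complex.exp (-u) * ∫ x in B, π x ∂ν)
    (A B : Set S) (hA : MeasurableSet A) (hB : MeasurableSet B) (hBA : B ⊆ A)
    (q : ℝ) (hq0 : 0 ≤ q) (hq : ∀ x ∉ A, (P x {ω | ω 1 ∉ A}).toReal ≤ q)
    (hqu : q < ‖Complex.exp (-u)‖) :
    ∫ x in A, π x *
        (∫ ω, Set.indicator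
            {ω' : ℕ → S | ∃ n, 1 ≤ n ∧ ω' n ∈ B ∧ ∀ m, 1 ≤ m → m < n → ω' m ∉ A}
            (fun ω' => Complex.exp (u * ((retTime A ω' : ℂ) - 1))) ω ∂(P x)) ∂ν
      = Complex.exp (-u) * ∫ x in B, π x ∂ν := by
  classical
  have heu_pos : (0 : ℝ) < ‖Complex.exp u‖ := norm_pos_iff.2 (Complex.exp_ne_zero _)
  have heun : Complex.exp u * Complex.exp (-u) = 1 := by rw [← Complex.exp_add]; simp
  have hnorm1 : ‖Complex.exp u‖ * ‖Complex.exp (-u)‖ = 1 := by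
    rw [← norm_mul, heun, norm_one]
  set r : ℝ := q * ‖Complex.exp u‖ with hrdef
  have hr0 : 0 ≤ r := mul_nonneg hq0 (le_of_lt heu_pos)
  have hr1 : r < 1 := by
    calc r = q * ‖Complex.exp u‖ := rfl
      _ < ‖Complex.exp (-u)‖ * ‖Complex.exp u‖ :=
          mul_lt_mul_of_pos_right hqu heu_pos
      _ = 1 := by rw [mul_comm]; exact hnorm1
  set M : ℝ := ∫ x, ‖π x‖ ∂ν with hMdef
  have hM0 : 0 ≤ M := integral_nonneg fun x => norm_nonneg _
  -- bounds on hfun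
  have hfun0 : ∀ k x, 0 ≤ hfun P A B k x := fun k x => ENNReal.toReal_nonneg
  have hfun1 : ∀ k x, hfun P A B k x ≤ 1 := fun k x => toReal_prob_le_one _
  have hfunm : ∀ k, Measurable (hfun P A B k) := fun k =>
    (P.measurable_coe (meas_ev hA hB k)).ennreal_toReal
  have hhb : ∀ n x, hfun P A B (n + 2) x ≤ q ^ n := fun n x =>
    ev_bound P hStart hMarkov hA hq0 hq n x
  -- bounds on cval, gval
  have hcb : ∀ n, ‖cval P ν π A B (n + 2)‖ ≤ q ^ n * M := by
    intro n
    have h1 := norm_setint_bound ν hπint (hfunm (n + 2)) (hfun0 (n + 2))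
      (b := q ^ n) (by positivity) (hhb n) Set.univ
    rw [Measure.restrict_univ] at h1
    exact h1
  have hgb : ∀ n, ‖gval P ν π A B (n + 2)‖ ≤ q ^ n * M :=
    fun n => norm_setint_bound ν hπint (hfunm (n + 2)) (hfun0 (n + 2))
      (b := q ^ n) (by positivity) (hhb n) A
  -- recursion
  have hrec : ∀ k, 1 ≤ k → cval P ν π A B (k + 1)
      = Complex.exp (-u) * (cval P ν π A B k - gval P ν π A B k) := by
    intro k hk
    simpa only [cval, gval, hfun] using
      c_recursion P ν hStart hMarkov π hπint u heigen hA hB k hk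
  have hgeq : ∀ n : ℕ, gval P ν π A B (n + 1)
      = cval P ν π A B (n + 1) - Complex.exp u * cval P ν π A B (n + 2) := by
    intro n
    have h1 := hrec (n + 1) (by omega)
    have h2 : Complex.exp u * cval P ν π A B (n + 2)
        = Complex.exp u * Complex.exp (-u)
            * (cval P ν π A B (n + 1) - gval P ν π A B (n + 1)) := by
      rw [h1]; ring
    rw [heun, one_mul] at h2
    rw [h2]; ring
  -- telescoping partial sums
  have hpart : ∀ N : ℕ, (∑ n ∈ Finset.range N,
        Complex.exp (u * (n : ℂ)) * gval P ν π A B (n + 1))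
      = cval P ν π A B 1 - Complex.exp (u * (N : ℂ)) * cval P ν π A B (N + 1) := by
    intro N
    have hterm : ∀ n : ℕ, Complex.exp (u * (n : ℂ)) * gval P ν π A B (n + 1)
        = (fun m : ℕ => Complex.exp (u * (m : ℂ)) * cval P ν π A B (m + 1)) n
          - (fun m : ℕ => Complex.exp (u * (m : ℂ)) * cval P ν π A B (m + 1)) (n + 1) := by
      intro n
      simp only
      rw [hgeq n]
      have hexp : Complex.exp (u * ((n : ℂ) + 1))
          = Complex.exp (u * (n : ℂ)) * Complex.exp u := by
        rw [← Complex.exp_add]; ring_nf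
      push_cast
      rw [hexp]
      ring
    calc (∑ n ∈ Finset.range N, Complex.exp (u * (n : ℂ)) * gval P ν π A B (n + 1))
        = ∑ n ∈ Finset.range N,
            ((fun m : ℕ => Complex.exp (u * (m : ℂ)) * cval P ν π A B (m + 1)) n
            - (fun m : ℕ => Complex.exp (u * (m : ℂ)) * cval P ν π A B (m + 1)) (n + 1)) :=
          Finset.sum_congr rfl fun n _ => hterm n
      _ = Complex.exp (u * ((0 : ℕ) : ℂ)) * cval P ν π A B 1
            - Complex.exp (u * (N : ℂ)) * cval P ν π A B (N + 1) :=
          Finset.sum_range_sub' _ N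
      _ = cval P ν π A B 1 - Complex.exp (u * (N : ℂ)) * cval P ν π A B (N + 1) := by
          norm_num
  -- tail tends to zero
  have htail : Tendsto (fun N : ℕ => Complex.exp (u * (N : ℂ)) * cval P ν π A B (N + 1))
      atTop (𝓝 0) := by
    refine (tendsto_add_atTop_iff_nat 1).1 ?_
    have hg0 : Tendsto (fun k : ℕ => ‖Complex.exp u‖ * M * r ^ k) atTop (𝓝 0) := by
      simpa using Tendsto.const_mul (‖Complex.exp u‖ * M)
        (tendsto_pow_atTop_nhds_zero_of_lt_one hr0 hr1)
    refine squeeze_zero_norm (fun n => ?_) hg0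
    rw [norm_mul, exp_norm_pow]
    calc ‖Complex.exp u‖ ^ (n + 1) * ‖cval P ν π A B (n + 1 + 1)‖
        ≤ ‖Complex.exp u‖ ^ (n + 1) * (q ^ n * M) := by
          refine mul_le_mul_of_nonneg_left ?_ (by positivity)
          exact hcb n
      _ = ‖Complex.exp u‖ * M * r ^ n := by rw [hrdef]; ring
  -- summability
  have hsum : Summable (fun n : ℕ => Complex.exp (u * (n : ℂ)) * gval P ν π A B (n + 1)) := by
    refine (summable_nat_add_iff 1).1 ?_
    refine Summable.of_norm_bounded
      (((summable_geometric_of_lt_one hr0 hr1)).mul_left (‖Complex.exp u‖ * M)) (fun n => ?_)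
    rw [norm_mul, exp_norm_pow]
    calc ‖Complex.exp u‖ ^ (n + 1) * ‖gval P ν π A B (n + 1 + 1)‖
        ≤ ‖Complex.exp u‖ ^ (n + 1) * (q ^ n * M) := by
          refine mul_le_mul_of_nonneg_left ?_ (by positivity)
          exact hgb n
      _ = ‖Complex.exp u‖ * M * r ^ n := by rw [hrdef]; ring
  -- the tsum equals cval 1
  have htsum : (∑' n : ℕ, Complex.exp (u * (n : ℂ)) * gval P ν π A B (n + 1))
      = cval P ν π A B 1 := by
    have h1 := hsum.hasSum.tendsto_sum_nat
    have h2 : Tendsto (fun N : ℕ => ∑ n ∈ Finset.range N,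
        Complex.exp (u * (n : ℂ)) * gval P ν π A B (n + 1)) atTop
        (𝓝 (cval P ν π A B 1)) := by
      simp only [hpart]
      simpa using tendsto_const_nhds.sub htail
    exact tendsto_nhds_unique h1 h2
  -- cval 1 = exp(-u) π(B)
  have hc1 : cval P ν π A B 1 = Complex.exp (-u) * ∫ x in B, π x ∂ν := by
    have h1 : (fun x => π x * ((hfun P A B 1 x : ℝ) : ℂ))
        = fun x => π x * ((P x {ω : ℕ → S | ω 1 ∈ B}).toReal : ℂ) := by
      funext x
      rw [hfun, ev_one]
    rw [cval, h1]
    exact heigen B hB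
  -- rewrite the inner integral
  have hLHS1 : ∫ x in A, π x *
        (∫ ω, Set.indicator
            {ω' : ℕ → S | ∃ n, 1 ≤ n ∧ ω' n ∈ B ∧ ∀ m, 1 ≤ m → m < n → ω' m ∉ A}
            (fun ω' => Complex.exp (u * ((retTime A ω' : ℂ) - 1))) ω ∂(P x)) ∂ν
      = ∫ x in A, π x * (∑' n : ℕ, Complex.exp (u * (n : ℂ))
          * ((hfun P A B (n + 1) x : ℝ) : ℂ)) ∂ν := by
    congr 1
    funext x
    rw [inner_integral P hStart hMarkov hA hB hBA hq0 hq u hr1 x]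
    rfl
  -- swap sum and integral in the outer integral
  have hswap : ∫ x in A, π x * (∑' n : ℕ, Complex.exp (u * (n : ℂ))
        * ((hfun P A B (n + 1) x : ℝ) : ℂ)) ∂ν
      = ∑' n : ℕ, Complex.exp (u * (n : ℂ)) * gval P ν π A B (n + 1) := by
    have hGint : ∀ n : ℕ, Integrable
        (fun x => π x * (Complex.exp (u * (n : ℂ)) * ((hfun P A B (n + 1) x : ℝ) : ℂ)))
        (ν.restrict A) := by
      intro n
      refine integrable_pi_mul (ν.restrict A) hπint.restrict
        ((Complex.measurable_ofReal.comp (hfunm (n + 1))).const_mul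
          (Complex.exp (u * (n : ℂ)))).aestronglyMeasurable
        (C := ‖Complex.exp u‖ ^ n) ?_
      intro x
      rw [norm_mul, Complex.norm_real, Real.norm_of_nonneg (hfun0 _ _), exp_norm_pow]
      calc ‖Complex.exp u‖ ^ n * hfun P A B (n + 1) x
          ≤ ‖Complex.exp u‖ ^ n * 1 :=
            mul_le_mul_of_nonneg_left (hfun1 _ _) (by positivity)
        _ = ‖Complex.exp u‖ ^ n := mul_one _
    have hGsum : Summable fun n : ℕ => ∫ x in A,
        ‖π x * (Complex.exp (u * (n : ℂ)) * ((hfun P A B (n + 1) x : ℝ) : ℂ))‖ ∂ν := by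
      refine (summable_nat_add_iff 1).1 ?_
      refine Summable.of_nonneg_of_le
        (fun n => integral_nonneg fun x => norm_nonneg _) (fun n => ?_)
        (((summable_geometric_of_lt_one hr0 hr1)).mul_left (‖Complex.exp u‖ * M))
      have hptb : ∀ x, ‖π x * (Complex.exp (u * ((n + 1 : ℕ) : ℂ))
          * ((hfun P A B (n + 1 + 1) x : ℝ) : ℂ))‖
          ≤ ‖π x‖ * (‖Complex.exp u‖ ^ (n + 1) * q ^ n) := by
        intro x
        rw [norm_mul, norm_mul, Complex.norm_real,
          Real.norm_of_nonneg (hfun0 _ _), exp_norm_pow]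
        refine mul_le_mul_of_nonneg_left ?_ (norm_nonneg _)
        exact mul_le_mul_of_nonneg_left (hhb n x) (by positivity)
      calc ∫ x in A, ‖π x * (Complex.exp (u * ((n + 1 : ℕ) : ℂ))
              * ((hfun P A B (n + 1 + 1) x : ℝ) : ℂ))‖ ∂ν
          ≤ ∫ x in A, ‖π x‖ * (‖Complex.exp u‖ ^ (n + 1) * q ^ n) ∂ν :=
            integral_mono (hGint (n + 1)).norm
              ((hπint.norm.mul_const _).restrict) hptb
        _ = (∫ x in A, ‖π x‖ ∂ν) * (‖Complex.exp u‖ ^ (n + 1) * q ^ n) :=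
            integral_mul_const _ _
        _ ≤ M * (‖Complex.exp u‖ ^ (n + 1) * q ^ n) := by
            refine mul_le_mul_of_nonneg_right ?_ (by positivity)
            exact setIntegral_le_integral hπint.norm
              (Filter.Eventually.of_forall fun x => norm_nonneg _)
        _ = ‖Complex.exp u‖ * M * r ^ n := by rw [hrdef]; ring
    have hpt : (fun x => π x * (∑' n : ℕ, Complex.exp (u * (n : ℂ))
        * ((hfun P A B (n + 1) x : ℝ) : ℂ)))
        = fun x => ∑' n : ℕ, π x * (Complex.exp (u * (n : ℂ))
            * ((hfun P A B (n + 1) x : ℝ) : ℂ)) := by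
      funext x
      exact (tsum_mul_left).symm
    rw [hpt, ← integral_tsum_of_summable_integral_norm hGint hGsum]
    congr 1
    funext n
    have hcomm : (fun x => π x * (Complex.exp (u * (n : ℂ))
        * ((hfun P A B (n + 1) x : ℝ) : ℂ)))
        = fun x => Complex.exp (u * (n : ℂ)) * (π x * ((hfun P A B (n + 1) x : ℝ) : ℂ)) := by
      funext x; ring
    rw [hcomm, integral_const_mul]
    rfl
  rw [hLHS1, hswap, htsum, hc1]

end Part8

/-- If `π` is a left eigenfunction of the kernel `K` with eigenvalue `e^{-u}`, then for
`B ⊆ A ⊆ Σ`: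
`∫_A π(x) E_x[e^{u(τ⁺_A - 1)} 1{τ⁺_B < τ⁺_{A∖B}}] dx = e^{-u} π(B)`.
The event `{τ⁺_B < τ⁺_{A∖B}}` is that the first visit to `A` (at a positive time)
exists and takes place in `B`. -/
theorem left_eigenfunction_committor
    {S : Type*} [MeasurableSpace S] [MeasurableSingletonClass S]
    (P : Kernel S (ℕ → S)) [IsMarkovKernel P]
    (ν : Measure S)
    (hStart : ∀ x : S, P x {ω | ω 0 = x} = 1)
    (hMarkov : ∀ (x : S) (F : (ℕ → S) → ℂ), Measurable F → (∃ C, ∀ ω, ‖F ω‖ ≤ C) →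
      ∫ ω, F (fun n => ω (n + 1)) ∂(P x) = ∫ ω, (∫ ω', F ω' ∂(P (ω 1))) ∂(P x))
    (π : S → ℂ) (hπint : Integrable π ν)
    (u : ℂ)
    -- `π K = e^{-u} π`
    (heigen : ∀ B : Set S, MeasurableSet B →
      ∫ x, π x * ((P x {ω | ω 1 ∈ B}).toReal : ℂ) ∂ν = Complex.exp (-u) * ∫ x in B, π x ∂ν)
    (A B : Set S) (hA : MeasurableSet A) (hB : MeasurableSet B) (hBA : B ⊆ A)
    -- Laplace transform condition ensuring finiteness of `E_x[e^{u τ⁺_A}]`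
    (q : ℝ) (hq : ∀ x ∉ A, (P x {ω | ω 1 ∉ A}).toReal ≤ q)
    (hqu : q < ‖Complex.exp (-u)‖) :
    ∫ x in A, π x *
        (∫ ω, Set.indicator
            {ω' : ℕ → S | ∃ n, 1 ≤ n ∧ ω' n ∈ B ∧ ∀ m, 1 ≤ m → m < n → ω' m ∉ A}
            (fun ω' => Complex.exp (u * ((retTime A ω' : ℂ) - 1))) ω ∂(P x)) ∂ν
      = Complex.exp (-u) * ∫ x in B, π x ∂ν := by
  have hq0' : (0 : ℝ) ≤ max q 0 := le_max_right _ _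
  have hq' : ∀ x ∉ A, (P x {ω | ω 1 ∉ A}).toReal ≤ max q 0 := fun x hx =>
    le_trans (hq x hx) (le_max_left _ _)
  have hqu' : max q 0 < ‖Complex.exp (-u)‖ :=
    max_lt hqu (norm_pos_iff.2 (Complex.exp_ne_zero _))
  exact key_theorem P ν hStart hMarkov π hπint u heigen A B hA hB hBA (max q 0) hq0' hq' hqu'
end

section
/- Let k be a substochastic kernel density on a bounded set B satisfying the uniform positivity condition: there exists L > 1 with inf_{x₀} k(x₀, y) ≤ k(x, y) ≤ L · inf_{x₀} k(x₀, y) for all x, y ∈ B. Let λ₀ > 0 be the principal eigenvalue of k (with positive left eigenfunction) and λ₁ any other eigenvalue. Then the spectral gap ratio θ = |λ₁|/λ₀ satisfies θ ≤ L − inf_{x∈B} k(x, B)/λ₀, where k(x,B) = ∫_B k(x,y) dy. -/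
open MeasureTheory

/-- Spectral gap estimate from uniform positivity: if a substochastic kernel density `k`
on `B` satisfies `inf_{x₀} k(x₀,y) ≤ k(x,y) ≤ L · inf_{x₀} k(x₀,y)` for some `L > 1`,
has principal eigenvalue `λ₀ > 0` with positive (probability) left eigenfunction `π₀`
and positive right eigenfunction `φ₀`, then any other eigenvalue `λ₁` satisfies
`|λ₁|/λ₀ ≤ L - inf_x k(x,B)/λ₀`. -/
theorem spectral_gap_from_uniform_positivity
    {α : Type*} [TopologicalSpace α] [CompactSpace α] [Nonempty α]
    [MeasurableSpace α] [BorelSpace α]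
    (ν : Measure α) [IsFiniteMeasure ν]
    (k : α → α → ℝ) (hkc : Continuous fun p : α × α => k p.1 p.2)
    (hknn : ∀ x y, 0 ≤ k x y) (hsub : ∀ x, ∫ y, k x y ∂ν ≤ 1)
    (L : ℝ) (hL : 1 < L)
    -- uniform positivity condition
    (hpos : ∀ x y, (⨅ x₀, k x₀ y) ≤ k x y ∧ k x y ≤ L * ⨅ x₀, k x₀ y)
    (lam0 : ℝ) (hlam0 : 0 < lam0)
    (π0 : α → ℝ) (hπ0c : Continuous π0) (hπ0pos : ∀ x, 0 < π0 x)
    (hπ0norm : ∫ x, π0 x ∂ν = 1)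
    (hleft : ∀ y, ∫ x, π0 x * k x y ∂ν = lam0 * π0 y)
    (φ0 : α → ℝ) (hφ0c : Continuous φ0) (hφ0pos : ∀ x, 0 < φ0 x)
    (hright : ∀ x, ∫ y, k x y * φ0 y ∂ν = lam0 * φ0 x)
    -- any other eigenvalue `λ₁`, with eigenfunction `φ₁`
    (lam1 : ℂ) (hne : lam1 ≠ (lam0 : ℂ))
    (φ1 : α → ℂ) (hφ1c : Continuous φ1) (hφ1ne : ∃ x, φ1 x ≠ 0)
    (heig1 : ∀ x, ∫ y, (k x y : ℂ) * φ1 y ∂ν = lam1 * φ1 x) :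
    ‖lam1‖ / lam0 ≤ L - (⨅ x, ∫ y, k x y ∂ν) / lam0 := by
  obtain ⟨x1, hx1⟩ := hφ1ne
  have intR : ∀ {f : α → ℝ}, Continuous f → Integrable f ν := fun hf =>
    hf.integrable_of_hasCompactSupport (HasCompactSupport.of_compactSpace _)
  have intC : ∀ {f : α → ℂ}, Continuous f → Integrable f ν := fun hf =>
    hf.integrable_of_hasCompactSupport (HasCompactSupport.of_compactSpace _)
  have hky : ∀ y, Continuous fun x => k x y := fun y =>
    hkc.comp (continuous_id.prodMk continuous_const)
  have hkx : ∀ x, Continuous fun y => k x y := fun x =>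
    hkc.comp (continuous_const.prodMk continuous_id)
  set m : α → ℝ := fun y => ⨅ x₀, k x₀ y with hm
  have hmnn : ∀ y, 0 ≤ m y := fun y => Real.iInf_nonneg (fun x => hknn x y)
  -- key pointwise bound : k x y ≤ L * lam0 * π0 y
  have hbound : ∀ x y, k x y ≤ L * lam0 * π0 y := by
    intro x y
    have h1 : m y ≤ lam0 * π0 y := by
      calc m y = (∫ x, π0 x ∂ν) * m y := by rw [hπ0norm, one_mul]
        _ = ∫ x, π0 x * m y ∂ν := (integral_mul_const _ _).symm
        _ ≤ ∫ x, π0 x * k x y ∂ν := by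
            apply integral_mono (intR (hπ0c.mul continuous_const))
              (intR (hπ0c.mul (hky y)))
            intro x
            exact mul_le_mul_of_nonneg_left (hpos x y).1 (hπ0pos x).le
        _ = lam0 * π0 y := hleft y
    calc k x y ≤ L * m y := (hpos x y).2
      _ ≤ L * (lam0 * π0 y) := by
          exact mul_le_mul_of_nonneg_left h1 (by linarith)
      _ = L * lam0 * π0 y := (mul_assoc _ _ _).symm
  -- orthogonality
  have horth : ∫ y, (π0 y : ℂ) * φ1 y ∂ν = 0 := by
    have swap : ∫ x, ∫ y, (π0 x : ℂ) * ((k x y : ℂ) * φ1 y) ∂ν ∂ν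
              = ∫ y, ∫ x, (π0 x : ℂ) * ((k x y : ℂ) * φ1 y) ∂ν ∂ν := by
      apply integral_integral_swap_of_hasCompactSupport
      · apply Continuous.mul
        · exact Complex.continuous_ofReal.comp (hπ0c.comp continuous_fst)
        · exact (Complex.continuous_ofReal.comp hkc).mul (hφ1c.comp continuous_snd)
      · exact HasCompactSupport.of_compactSpace _
    have lhs : ∫ x, ∫ y, (π0 x : ℂ) * ((k x y : ℂ) * φ1 y) ∂ν ∂ν
             = lam1 * ∫ y, (π0 y : ℂ) * φ1 y ∂ν := by
      have : ∀ x, ∫ y, (π0 x : ℂ) * ((k x y : ℂ) * φ1 y) ∂ν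
               = (π0 x : ℂ) * (lam1 * φ1 x) := by
        intro x
        rw [integral_const_mul, heig1 x]
      rw [integral_congr_ae (Filter.Eventually.of_forall this), ← integral_const_mul]
      exact integral_congr_ae (Filter.Eventually.of_forall fun x => by ring)
    have rhs : ∫ y, ∫ x, (π0 x : ℂ) * ((k x y : ℂ) * φ1 y) ∂ν ∂ν
             = (lam0 : ℂ) * ∫ y, (π0 y : ℂ) * φ1 y ∂ν := by
      have : ∀ y, ∫ x, (π0 x : ℂ) * ((k x y : ℂ) * φ1 y) ∂ν
               = ((lam0 * π0 y : ℝ) : ℂ) * φ1 y := by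
        intro y
        have e1 : ∀ x, (π0 x : ℂ) * ((k x y : ℂ) * φ1 y)
                 = ((π0 x * k x y : ℝ) : ℂ) * φ1 y := by
          intro x; push_cast; ring
        rw [integral_congr_ae (Filter.Eventually.of_forall e1), integral_mul_const,
          ← hleft y]
        exact congrArg (fun z => z * φ1 y) integral_ofReal
      rw [integral_congr_ae (Filter.Eventually.of_forall this), ← integral_const_mul]
      exact integral_congr_ae (Filter.Eventually.of_forall fun y => by push_cast; ring)
    have heq : lam1 * ∫ y, (π0 y : ℂ) * φ1 y ∂ν
             = (lam0 : ℂ) * ∫ y, (π0 y : ℂ) * φ1 y ∂ν := by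
      rw [← lhs, ← rhs, swap]
    rcases mul_eq_mul_right_iff.mp heq with h | h
    · exact absurd h hne
    · exact h
  -- maximizer of ‖φ1‖
  obtain ⟨xs, -, hxs⟩ := isCompact_univ.exists_isMaxOn Set.univ_nonempty
    (hφ1c.norm.continuousOn)
  have hxs' : ∀ y, ‖φ1 y‖ ≤ ‖φ1 xs‖ := fun y => hxs (Set.mem_univ y)
  set M := ‖φ1 xs‖ with hM
  have hMpos : 0 < M := lt_of_lt_of_le (norm_pos_iff.mpr hx1) (hxs' x1)
  set c : ℝ := L * lam0 with hc
  -- eigen identity with subtracted kernel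
  have key : lam1 * φ1 xs = ∫ y, ((k xs y : ℂ) - (c : ℂ) * (π0 y : ℂ)) * φ1 y ∂ν := by
    have e1 : ∀ y, ((k xs y : ℂ) - (c : ℂ) * (π0 y : ℂ)) * φ1 y
            = (k xs y : ℂ) * φ1 y - (c : ℂ) * ((π0 y : ℂ) * φ1 y) := by
      intro y; ring
    rw [integral_congr_ae (Filter.Eventually.of_forall e1), integral_sub, integral_const_mul,
      horth, heig1 xs, mul_zero, sub_zero]
    · exact intC ((Complex.continuous_ofReal.comp (hkx xs)).mul hφ1c)
    · exact intC (continuous_const.mul ((Complex.continuous_ofReal.comp hπ0c).mul hφ1c))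
  -- norm bound
  have hnorm : ‖lam1‖ * M ≤ (c - ∫ y, k xs y ∂ν) * M := by
    have step1 : ‖lam1 * φ1 xs‖ ≤ ∫ y, (c * π0 y - k xs y) * M ∂ν := by
      rw [key]
      refine le_trans (norm_integral_le_integral_norm _) ?_
      apply integral_mono
      · exact (intC (((Complex.continuous_ofReal.comp (hkx xs)).sub
          (continuous_const.mul (Complex.continuous_ofReal.comp hπ0c))).mul hφ1c)).norm
      · exact intR (((continuous_const.mul hπ0c).sub (hkx xs)).mul continuous_const)
      intro y
      dsimp only
      have e2 : ((k xs y : ℂ) - (c : ℂ) * (π0 y : ℂ)) = ((k xs y - c * π0 y : ℝ) : ℂ) := by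
        push_cast; ring
      rw [norm_mul, e2, Complex.norm_real, Real.norm_eq_abs,
        abs_of_nonpos (by linarith [hbound xs y])]
      have h3 : 0 ≤ c * π0 y - k xs y := by linarith [hbound xs y]
      rw [neg_sub]
      exact mul_le_mul_of_nonneg_left (hxs' y) h3
    have step2 : ∫ y, (c * π0 y - k xs y) * M ∂ν = (c - ∫ y, k xs y ∂ν) * M := by
      rw [integral_mul_const, integral_sub (intR (f := fun y => c * π0 y) (continuous_const.mul hπ0c)) (intR (hkx xs)),
        integral_const_mul, hπ0norm, mul_one]
    rw [← step2]
    calc ‖lam1‖ * M = ‖lam1 * φ1 xs‖ := by rw [norm_mul]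
      _ ≤ _ := step1
  have hlam1 : ‖lam1‖ ≤ c - ∫ y, k xs y ∂ν := le_of_mul_le_mul_right hnorm hMpos
  have hinf : (⨅ x, ∫ y, k x y ∂ν) ≤ ∫ y, k xs y ∂ν := by
    apply ciInf_le
    refine ⟨0, ?_⟩
    rintro z ⟨x, rfl⟩
    exact integral_nonneg (fun y => hknn x y)
  rw [div_le_iff₀ hlam0]
  have : (L - (⨅ x, ∫ y, k x y ∂ν) / lam0) * lam0 = L * lam0 - (⨅ x, ∫ y, k x y ∂ν) := by
    field_simp
  rw [this]
  calc ‖lam1‖ ≤ c - ∫ y, k xs y ∂ν := hlam1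
    _ ≤ L * lam0 - (⨅ x, ∫ y, k x y ∂ν) := by rw [hc]; linarith
end

section
/- Let P ∈ ℝ^{k×k} be a stochastic matrix and set P̂ = I − P, written in block form P̂ = [[P̂₁₁, P̂₁₂],[P̂₂₁, â]] with P̂₁₁ ∈ ℝ^{(k−1)×(k−1)}, P̂₁₂ ∈ ℝ^{k−1}, P̂₂₁ᵀ ∈ ℝ^{k−1} and â ∈ ℝ, â ≠ 0. Let b bound the off-diagonal row sums so that ‖P̂₁₁‖_∞ ≤ 2b, ‖P̂₁₂‖_∞ ≤ b and ‖P̂₂₁‖_∞ = â. If b/â < 1/8, then the quadratic matrix equation P̂₁₁ S₁₂ − S₁₂ â − S₁₂ P̂₂₁ S₁₂ + P̂₁₂ = 0 has a unique solution S₁₂ in the ball {Ξ ∈ ℝ^{k−1} : ‖Ξ‖_∞ ≤ 2‖P̂₁₂‖_∞/â}. -/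
open Matrix

/-- Block-triangularization fixed point: under the bounds
`‖P̂₁₁‖_∞ ≤ 2b`, `‖P̂₁₂‖_∞ ≤ b`, `‖P̂₂₁‖_∞ = â ≠ 0` and `b/â < 1/8`, the quadratic
equation `P̂₁₁ S₁₂ - S₁₂ â - S₁₂ P̂₂₁ S₁₂ + P̂₁₂ = 0` has a unique solution in the ball
`{Ξ : ‖Ξ‖_∞ ≤ 2‖P̂₁₂‖_∞/â}`.  Here the norm on `Fin n → ℝ` is the sup norm. -/
theorem block_triangularization_fixed_point
    {n : ℕ}
    (P11 : Matrix (Fin n) (Fin n) ℝ) (P12 P21 : Fin n → ℝ) (a b : ℝ)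
    (ha : a ≠ 0)
    (hP11 : ∀ v : Fin n → ℝ, ‖P11.mulVec v‖ ≤ 2 * b * ‖v‖)
    (hP12 : ‖P12‖ ≤ b)
    (hP21 : ∑ i, |P21 i| = a)
    (hba : b / a < 1 / 8) :
    ∃! Ξ : Fin n → ℝ, ‖Ξ‖ ≤ 2 * ‖P12‖ / a ∧
      P11.mulVec Ξ - a • Ξ - (P21 ⬝ᵥ Ξ) • Ξ + P12 = 0 := by
  have ha0 : 0 < a :=
    lt_of_le_of_ne (hP21 ▸ Finset.sum_nonneg fun i _ => abs_nonneg _) (Ne.symm ha)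
  have hb0 : 0 ≤ b := le_trans (norm_nonneg _) hP12
  have hb8 : b < a / 8 := by rw [div_lt_iff₀ ha0] at hba; linarith
  set r : ℝ := 2 * ‖P12‖ / a with hr
  have hp0 : 0 ≤ ‖P12‖ := norm_nonneg _
  have hr0 : 0 ≤ r := by positivity
  have hra : a * r = 2 * ‖P12‖ := by rw [hr]; field_simp
  have hr4 : r < 1 / 4 := by
    rw [hr, div_lt_iff₀ ha0]; nlinarith
  -- dot product bound
  have hdot : ∀ x : Fin n → ℝ, |P21 ⬝ᵥ x| ≤ a * ‖x‖ := by
    intro x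
    calc |P21 ⬝ᵥ x| = |∑ i, P21 i * x i| := rfl
      _ ≤ ∑ i, |P21 i * x i| := Finset.abs_sum_le_sum_abs _ _
      _ ≤ ∑ i, |P21 i| * ‖x‖ := by
          refine Finset.sum_le_sum fun i _ => ?_
          rw [abs_mul]
          exact mul_le_mul_of_nonneg_left (norm_le_pi_norm x i) (abs_nonneg _)
      _ = a * ‖x‖ := by rw [← Finset.sum_mul, hP21]
  set Φ : (Fin n → ℝ) → (Fin n → ℝ) :=
    fun Ξ => a⁻¹ • (P12 + P11.mulVec Ξ - (P21 ⬝ᵥ Ξ) • Ξ) with hΦ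
  have hkey : ∀ Ξ, a • Φ Ξ = P12 + P11.mulVec Ξ - (P21 ⬝ᵥ Ξ) • Ξ :=
    fun Ξ => smul_inv_smul₀ ha _
  have hfix : ∀ Ξ : Fin n → ℝ,
      (P11.mulVec Ξ - a • Ξ - (P21 ⬝ᵥ Ξ) • Ξ + P12 = 0) ↔ Φ Ξ = Ξ := by
    intro Ξ
    constructor
    · intro h
      have h2 : P12 + P11.mulVec Ξ - (P21 ⬝ᵥ Ξ) • Ξ = a • Ξ := by
        rw [← sub_eq_zero, ← h]; abel
      have h3 : a • Φ Ξ = a • Ξ := by rw [hkey, h2]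
      exact smul_right_injective (Fin n → ℝ) ha h3
    · intro h
      have h2 : a • Ξ = P12 + P11.mulVec Ξ - (P21 ⬝ᵥ Ξ) • Ξ := by
        rw [← hkey, h]
      rw [h2]; abel
  -- maps ball to ball
  have hmap : ∀ Ξ : Fin n → ℝ, ‖Ξ‖ ≤ r → ‖Φ Ξ‖ ≤ r := by
    intro Ξ hΞ
    have hx0 : 0 ≤ ‖Ξ‖ := norm_nonneg _
    have h1 : ‖Φ Ξ‖ ≤ a⁻¹ * (‖P12‖ + 2 * b * ‖Ξ‖ + a * ‖Ξ‖ * ‖Ξ‖) := by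
      rw [hΦ]
      simp only [norm_smul, norm_inv, Real.norm_eq_abs, abs_of_pos ha0]
      refine mul_le_mul_of_nonneg_left ?_ (by positivity)
      calc ‖P12 + P11.mulVec Ξ - (P21 ⬝ᵥ Ξ) • Ξ‖
          ≤ ‖P12 + P11.mulVec Ξ‖ + ‖(P21 ⬝ᵥ Ξ) • Ξ‖ := norm_sub_le _ _
        _ ≤ ‖P12‖ + ‖P11.mulVec Ξ‖ + ‖(P21 ⬝ᵥ Ξ) • Ξ‖ := by
            gcongr; exact norm_add_le _ _
        _ ≤ ‖P12‖ + 2 * b * ‖Ξ‖ + a * ‖Ξ‖ * ‖Ξ‖ := by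
            gcongr
            · exact hP11 Ξ
            · rw [norm_smul, Real.norm_eq_abs]
              exact mul_le_mul_of_nonneg_right (hdot Ξ) hx0
    refine h1.trans ?_
    rw [inv_mul_le_iff₀ ha0, hra]
    nlinarith [mul_nonneg (sub_nonneg.mpr (le_of_lt hb8)) hx0,
      mul_nonneg (sub_nonneg.mpr (hΞ.trans hr4.le)) hx0,
      mul_nonneg hp0 (sub_nonneg.mpr hΞ),
      mul_le_mul_of_nonneg_right hΞ hx0, mul_le_mul_of_nonneg_left hΞ hp0]
  -- contraction estimate
  have hlip : ∀ Ξ Η : Fin n → ℝ, ‖Ξ‖ ≤ r → ‖Η‖ ≤ r →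
      ‖Φ Ξ - Φ Η‖ ≤ 3 / 4 * ‖Ξ - Η‖ := by
    intro Ξ Η hΞ hΗ
    have hδ0 : 0 ≤ ‖Ξ - Η‖ := norm_nonneg _
    have hdiff : Φ Ξ - Φ Η = a⁻¹ •
        (P11.mulVec (Ξ - Η) - ((P21 ⬝ᵥ (Ξ - Η)) • Ξ + (P21 ⬝ᵥ Η) • (Ξ - Η))) := by
      rw [hΦ]
      simp only [Matrix.mulVec_sub, dotProduct_sub, ← smul_sub]
      congr 1
      ext i
      simp only [Pi.sub_apply, Pi.add_apply, Pi.smul_apply, smul_eq_mul, sub_smul]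
      ring
    have h1 : ‖Φ Ξ - Φ Η‖ ≤ a⁻¹ * (2 * b * ‖Ξ - Η‖ + a * ‖Ξ - Η‖ * r + a * r * ‖Ξ - Η‖) := by
      rw [hdiff, norm_smul, norm_inv, Real.norm_eq_abs, abs_of_pos ha0]
      refine mul_le_mul_of_nonneg_left ?_ (by positivity)
      calc ‖P11.mulVec (Ξ - Η) - ((P21 ⬝ᵥ (Ξ - Η)) • Ξ + (P21 ⬝ᵥ Η) • (Ξ - Η))‖
          ≤ ‖P11.mulVec (Ξ - Η)‖ + (‖(P21 ⬝ᵥ (Ξ - Η)) • Ξ‖ + ‖(P21 ⬝ᵥ Η) • (Ξ - Η)‖) := by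
            refine (norm_sub_le _ _).trans ?_
            gcongr
            exact norm_add_le _ _
        _ ≤ 2 * b * ‖Ξ - Η‖ + (a * ‖Ξ - Η‖ * r + a * r * ‖Ξ - Η‖) := by
            gcongr
            · exact hP11 _
            · rw [norm_smul, Real.norm_eq_abs]
              calc |P21 ⬝ᵥ (Ξ - Η)| * ‖Ξ‖ ≤ (a * ‖Ξ - Η‖) * r := by
                    exact mul_le_mul (hdot _) hΞ (norm_nonneg _) (by positivity)
                _ = a * ‖Ξ - Η‖ * r := rfl
            · rw [norm_smul, Real.norm_eq_abs]
              exact mul_le_mul (le_trans (hdot Η) (by nlinarith)) le_rfl hδ0 (by positivity)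
        _ = 2 * b * ‖Ξ - Η‖ + a * ‖Ξ - Η‖ * r + a * r * ‖Ξ - Η‖ := by ring
    refine h1.trans ?_
    rw [inv_mul_le_iff₀ ha0]
    have hrab : a * r ≤ 2 * b := by rw [hra]; linarith
    nlinarith [mul_le_mul_of_nonneg_right hrab hδ0]
  -- Banach fixed point on the closed ball
  haveI : CompleteSpace (Metric.closedBall (0 : Fin n → ℝ) r) :=
    Metric.isClosed_closedBall.completeSpace_coe
  haveI : Nonempty (Metric.closedBall (0 : Fin n → ℝ) r) :=
    ⟨⟨0, Metric.mem_closedBall_self hr0⟩⟩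
  set f : Metric.closedBall (0 : Fin n → ℝ) r → Metric.closedBall (0 : Fin n → ℝ) r :=
    fun x => ⟨Φ x.1, mem_closedBall_zero_iff.mpr (hmap x.1 (mem_closedBall_zero_iff.mp x.2))⟩ with hf
  have hc : ContractingWith (3/4 : NNReal) f := by
    refine ⟨by rw [← NNReal.coe_lt_coe]; norm_num, LipschitzWith.of_dist_le_mul fun x y => ?_⟩
    rw [Subtype.dist_eq, Subtype.dist_eq, dist_eq_norm, dist_eq_norm]
    have := hlip x.1 y.1 (mem_closedBall_zero_iff.mp x.2) (mem_closedBall_zero_iff.mp y.2)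
    calc ‖(f x).1 - (f y).1‖ = ‖Φ x.1 - Φ y.1‖ := rfl
      _ ≤ 3 / 4 * ‖x.1 - y.1‖ := this
      _ = ((3/4 : NNReal) : ℝ) * ‖x.1 - y.1‖ := by norm_num
  set x₀ := hc.fixedPoint f with hx₀
  have hfp : Φ (x₀ : Fin n → ℝ) = (x₀ : Fin n → ℝ) :=
    congrArg Subtype.val (hc.fixedPoint_isFixedPt)
  have hx₀mem : ‖(x₀ : Fin n → ℝ)‖ ≤ r := mem_closedBall_zero_iff.mp x₀.2
  refine ⟨x₀.1, ⟨hx₀mem, (hfix _).mpr hfp⟩, ?_⟩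
  intro y ⟨hy1, hy2⟩
  have hΦy : Φ y = y := (hfix y).mp hy2
  have h := hlip y x₀.1 hy1 hx₀mem
  rw [hΦy, hfp] at h
  have : ‖y - x₀.1‖ = 0 := by linarith [norm_nonneg (y - x₀.1)]
  exact sub_eq_zero.mp (norm_eq_zero.mp this)
end

section
/- In the setting of the block-triangularization of P̂ = I − P with unique fixed point S₁₂⋆ (which exists when b/â < 1/8), the solution satisfies the refined estimate ‖S₁₂⋆ − P̂₁₂/â‖_∞ ≤ (4b/â)/(1 − 4b/â) · ‖P̂₁₂‖_∞/â. -/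
open Matrix

/-- Refined estimate for the block-triangularization fixed point: if `S₁₂⋆` is the
solution, in the ball of radius `2‖P̂₁₂‖_∞/â`, of
`P̂₁₁ S₁₂ - S₁₂ â - S₁₂ P̂₂₁ S₁₂ + P̂₁₂ = 0`, then
`‖S₁₂⋆ - P̂₁₂/â‖_∞ ≤ (4b/â)/(1 - 4b/â) · ‖P̂₁₂‖_∞/â`. -/
theorem block_triangularization_refined_estimate
    {n : ℕ}
    (P11 : Matrix (Fin n) (Fin n) ℝ) (P12 P21 : Fin n → ℝ) (a b : ℝ)
    (ha : a ≠ 0)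
    (hP11 : ∀ v : Fin n → ℝ, ‖P11.mulVec v‖ ≤ 2 * b * ‖v‖)
    (hP12 : ‖P12‖ ≤ b)
    (hP21 : ∑ i, |P21 i| = a)
    (hba : b / a < 1 / 8)
    (S12 : Fin n → ℝ)
    (hS12ball : ‖S12‖ ≤ 2 * ‖P12‖ / a)
    (hS12 : P11.mulVec S12 - a • S12 - (P21 ⬝ᵥ S12) • S12 + P12 = 0) :
    ‖S12 - a⁻¹ • P12‖ ≤ (4 * b / a) / (1 - 4 * b / a) * (‖P12‖ / a) := by
  have ha0 : 0 ≤ a := hP21 ▸ Finset.sum_nonneg fun i _ => abs_nonneg _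
  have hapos : 0 < a := lt_of_le_of_ne ha0 (Ne.symm ha)
  have hc0 : (0:ℝ) ≤ ‖P12‖ := norm_nonneg _
  have hb0 : (0:ℝ) ≤ b := le_trans hc0 hP12
  set d : ℝ := P21 ⬝ᵥ S12 with hd
  have hdot : |d| ≤ a * ‖S12‖ := by
    rw [← hP21, Finset.sum_mul, hd, dotProduct]
    calc |∑ i, P21 i * S12 i| ≤ ∑ i, |P21 i * S12 i| := Finset.abs_sum_le_sum_abs _ _
      _ ≤ ∑ i, |P21 i| * ‖S12‖ := Finset.sum_le_sum fun i _ => by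
          rw [abs_mul]
          exact mul_le_mul_of_nonneg_left (norm_le_pi_norm S12 i) (abs_nonneg _)
  have heq : S12 - a⁻¹ • P12 = a⁻¹ • (P11.mulVec S12 - d • S12) := by
    funext i
    have h := congrFun hS12 i
    simp only [Pi.add_apply, Pi.sub_apply, Pi.smul_apply, Pi.zero_apply, smul_eq_mul] at h ⊢
    field_simp
    linarith [h]
  have heq2 : S12 = a⁻¹ • (P11.mulVec S12 - d • S12 + P12) := by
    funext i
    have h := congrFun hS12 i
    simp only [Pi.add_apply, Pi.sub_apply, Pi.smul_apply, Pi.zero_apply, smul_eq_mul] at h ⊢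
    field_simp
    linarith [h]
  have hnorm1 : ‖P11.mulVec S12 - d • S12‖ ≤ 2 * b * ‖S12‖ + a * ‖S12‖ * ‖S12‖ := by
    calc ‖P11.mulVec S12 - d • S12‖ ≤ ‖P11.mulVec S12‖ + ‖d • S12‖ := norm_sub_le _ _
      _ ≤ 2 * b * ‖S12‖ + a * ‖S12‖ * ‖S12‖ := by
          have : ‖d • S12‖ = |d| * ‖S12‖ := by rw [norm_smul, Real.norm_eq_abs]
          have h2 : ‖d • S12‖ ≤ a * ‖S12‖ * ‖S12‖ := by
            rw [this]
            exact mul_le_mul_of_nonneg_right hdot (norm_nonneg _)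
          exact add_le_add (hP11 S12) h2
  have hainv : ‖(a⁻¹ : ℝ)‖ = a⁻¹ := by
    rw [Real.norm_eq_abs, abs_of_pos (inv_pos.mpr hapos)]
  have hbound : ‖S12 - a⁻¹ • P12‖ ≤ a⁻¹ * (2 * b * ‖S12‖ + a * ‖S12‖ * ‖S12‖) := by
    rw [heq, norm_smul, hainv]
    exact mul_le_mul_of_nonneg_left hnorm1 (le_of_lt (inv_pos.mpr hapos))
  have hboot : ‖S12‖ ≤ a⁻¹ * (2 * b * ‖S12‖ + a * ‖S12‖ * ‖S12‖ + ‖P12‖) := by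
    calc ‖S12‖ = ‖a⁻¹ • (P11.mulVec S12 - d • S12 + P12)‖ := by rw [← heq2]
      _ = a⁻¹ * ‖P11.mulVec S12 - d • S12 + P12‖ := by rw [norm_smul, hainv]
      _ ≤ a⁻¹ * (2 * b * ‖S12‖ + a * ‖S12‖ * ‖S12‖ + ‖P12‖) := by
          apply mul_le_mul_of_nonneg_left _ (le_of_lt (inv_pos.mpr hapos))
          calc ‖P11.mulVec S12 - d • S12 + P12‖ ≤ ‖P11.mulVec S12 - d • S12‖ + ‖P12‖ :=
                norm_add_le _ _
            _ ≤ 2 * b * ‖S12‖ + a * ‖S12‖ * ‖S12‖ + ‖P12‖ := by linarith [hnorm1]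
  -- pure arithmetic
  set s : ℝ := ‖S12‖ with hs
  set c : ℝ := ‖P12‖ with hc
  have hs0 : 0 ≤ s := norm_nonneg _
  have hsa : s * a ≤ 2 * c := by
    calc s * a ≤ (2 * c / a) * a := mul_le_mul_of_nonneg_right hS12ball ha0
      _ = 2 * c := by field_simp
  have hboot' : s * a ≤ 2 * b * s + a * s * s + c := by
    calc s * a ≤ a⁻¹ * (2 * b * s + a * s * s + c) * a :=
          mul_le_mul_of_nonneg_right hboot ha0
      _ = 2 * b * s + a * s * s + c := by field_simp
  have hb8 : 8 * b < a := by
    rw [div_lt_div_iff₀ hapos (by norm_num : (0:ℝ) < 8)] at hba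
    linarith
  -- key: s * (a - 4b) ≤ c
  have hkey : s * (a - 4 * b) ≤ c := by
    -- a*s ≤ 2c ≤ 2b, so a - 2b - a*s... use nlinarith
    have hc_le_b : c ≤ b := hP12
    nlinarith [hboot', hsa, hs0, hapos]
  have h2bas : 2 * b + a * s ≤ 4 * b := by
    have hc_le_b : c ≤ b := hP12
    nlinarith [hsa]
  have hfin : a⁻¹ * (2 * b * s + a * s * s) ≤ (4 * b / a) / (1 - 4 * b / a) * (c / a) := by
    have h1 : (0:ℝ) < a - 4 * b := by linarith
    have h2 : 1 - 4 * b / a = (a - 4 * b) / a := by field_simp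
    have key2 : s * (a - 4 * b) * (2 * b + a * s) ≤ c * (4 * b) := by
      have h3 : 0 ≤ 2 * b + a * s := by positivity
      calc s * (a - 4 * b) * (2 * b + a * s) ≤ c * (2 * b + a * s) :=
            mul_le_mul_of_nonneg_right hkey h3
        _ ≤ c * (4 * b) := mul_le_mul_of_nonneg_left h2bas hc0
    have hX : 2 * b * s + a * s * s ≤ 4 * b * c / (a - 4 * b) := by
      rw [le_div_iff₀ h1]
      nlinarith [key2]
    have hR : a⁻¹ * (4 * b * c / (a - 4 * b)) = (4 * b / a) / (1 - 4 * b / a) * (c / a) := by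
      rw [h2, div_div_div_eq, mul_comm (4 * b) a, mul_div_mul_left _ _ ha]
      field_simp
    calc a⁻¹ * (2 * b * s + a * s * s) ≤ a⁻¹ * (4 * b * c / (a - 4 * b)) :=
          mul_le_mul_of_nonneg_left hX (by positivity)
      _ = (4 * b / a) / (1 - 4 * b / a) * (c / a) := hR
  calc ‖S12 - a⁻¹ • P12‖ ≤ a⁻¹ * (2 * b * s + a * s * s) := hbound
    _ ≤ (4 * b / a) / (1 - 4 * b / a) * (c / a) := hfin
end
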